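/- arXiv:2508.08658 — 7 statements merged into one kernel-verified Lean document; each statement's English description precedes it below -/
import Mathlib

section
/- Under the above setup, for every comparator sequence (P̃_i^{t*}) with P̃_i^{t*} ∈ Ω_i for all i ∈ {1,…,M} and all t ∈ {0,…,T}, and with Σ_{i=1}^M G̃_i^t(P̃_i^{t*}) = 0 for every t ∈ {1,…,T}, the iterates of Algorithm 1 satisfy the dynamic-regret bound: Σ_{t=1}^T Σ_{i=1}^M [C_i^t(P_i^t) − C_i^t(P̃_i^{t*})] ≤ (R/α)·Σ_{t=1}^T Σ_{i=1}^M ‖P̃_i^{t*} − P̃_i^{(t−1)*}‖ + (1/(2α))·Σ_{i=1}^M ‖P_i^1 − P̃_i^{0*}‖² + φ²·M·α·T + (4ψ̃²M/ε̃^{3/2} + 2ψ̃²M)·β·T + (ψ̃²/M)·α·T/θ². -/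
/-!
For agent `i` at step `t`, convexity of `C_i^t`, the three-point inequality of the proximal step
and Young's inequality bound `C_i^t(P_i^t) - C_i^t(P̃_i^{t*})` by `α (φ² + ‖λ_i^t / M‖²)`, a term
that telescopes in `‖P̃_i^{t*} - P_i^t‖²` up to the path length of the comparator, and the
coupling term `⟪λ_i^t, G̃_i^t(P̃_i^{t*}) - G̃_i^t(P_i^t)⟫`.

As `∑_i G̃_i^t(P̃_i^{t*}) = 0`, the coupling terms add up to the pairing of the disagreement
`λ_i^t - λ̄^t` with a bounded vector, minus `M ⟪λ̄^t, Ḡ^t⟫`. Column stochasticity makes the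
average follow the undistributed recursion `λ̄^{t+1} = λ̄^t + β (Ḡ^t - θ λ̄^t)`, so `-⟪λ̄^t, Ḡ^t⟫`
telescopes in `‖λ̄^t‖²` up to `β ψ̃²`. The disagreement is contracted by `√κ̃ = √(1 - ε̃)` and
grows by at most `2 β ψ̃ √M` per step, so it stays below `2 √M ψ̃ β / ε̃^{3/2}`. The multipliers
stay in the ball of radius `ψ̃ / θ`: each update is a convex combination of points of that ball.
-/

open scoped RealInnerProductSpace
open Finset

theorem Finset.sum_Icc_sub_succ {G : Type*} [AddCommGroup G] (f : ℕ → G) (T : ℕ) :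
    ∑ t ∈ Icc 1 T, (f t - f (t + 1)) = f 1 - f (T + 1) := by
  rw [← Finset.Ico_add_one_right_eq_Icc, ← neg_sub, ← Finset.sum_Ico_sub f (by omega : 1 ≤ T + 1),
    ← Finset.sum_neg_distrib]
  simp

theorem le_of_le_mul_add_step {s : ℕ → ℝ} {a c B : ℝ} {N : ℕ} (hc : 0 ≤ c) (h0 : s 0 ≤ B)
    (hB : c * (B + a) ≤ B) (hstep : ∀ n ≤ N, s (n + 1) ≤ c * (s n + a)) :
    ∀ n ≤ N + 1, s n ≤ B := by
  intro n hn
  induction n with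
  | zero => exact h0
  | succ n ih => exact (hstep n (by omega)).trans (le_trans (by gcongr; exact ih (by omega)) hB)

theorem mul_one_add_pow_three_le_one {c s : ℝ} (hc : 0 ≤ c) (hs : 0 ≤ s) (h : c ^ 2 + s ^ 2 = 1) :
    c * (1 + s ^ 3) ≤ 1 := by
  refine (pow_le_one_iff_of_nonneg (by positivity) two_ne_zero).mp ?_
  have hid : (c * (1 + s ^ 3)) ^ 2 = 1 - s ^ 2 * ((1 - s) ^ 2 * c ^ 2 + (s ^ 3) ^ 2) := by
    linear_combination ((1 + s ^ 3) ^ 2 + s ^ 2 * (1 - s) ^ 2) * h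
  rw [hid, sub_le_self_iff]
  positivity

theorem sum_norm_sq_sub_le {F : Type*} [SeminormedAddCommGroup F] {T : ℕ} {p q : ℕ → F} {R : ℝ}
    (hR : ∀ t ∈ Icc 1 T, ‖q t - p t‖ ≤ R ∧ ‖q (t - 1) - p t‖ ≤ R) :
    ∑ t ∈ Icc 1 T, (‖q t - p t‖ ^ 2 - ‖q t - p (t + 1)‖ ^ 2)
      ≤ 2 * R * ∑ t ∈ Icc 1 T, ‖q t - q (t - 1)‖ + ‖p 1 - q 0‖ ^ 2 := by
  have hdrift : ∀ t ∈ Icc 1 T,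
      ‖q t - p t‖ ^ 2 - ‖q (t - 1) - p t‖ ^ 2 ≤ 2 * R * ‖q t - q (t - 1)‖ := by
    intro t ht
    obtain ⟨ha, hb⟩ := hR t ht
    have hdiff : |‖q t - p t‖ - ‖q (t - 1) - p t‖| ≤ ‖q t - q (t - 1)‖ := by
      simpa using abs_norm_sub_norm_le (q t - p t) (q (t - 1) - p t)
    nlinarith [abs_le.mp hdiff, norm_nonneg (q t - p t), norm_nonneg (q (t - 1) - p t)]
  have htel := sum_Icc_sub_succ (fun t => ‖q (t - 1) - p t‖ ^ 2) T
  simp only [Nat.add_sub_cancel, Nat.sub_self] at htel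
  calc ∑ t ∈ Icc 1 T, (‖q t - p t‖ ^ 2 - ‖q t - p (t + 1)‖ ^ 2)
      = ∑ t ∈ Icc 1 T, (‖q t - p t‖ ^ 2 - ‖q (t - 1) - p t‖ ^ 2)
        + ∑ t ∈ Icc 1 T, (‖q (t - 1) - p t‖ ^ 2 - ‖q t - p (t + 1)‖ ^ 2) := by
        rw [← sum_add_distrib]
        exact sum_congr rfl fun t _ => by ring
    _ ≤ ∑ t ∈ Icc 1 T, 2 * R * ‖q t - q (t - 1)‖ + ‖p 1 - q 0‖ ^ 2 := by
        gcongr ?_ + ?_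
        · exact sum_le_sum hdrift
        · rw [htel, norm_sub_rev]
          linarith [sq_nonneg ‖q T - p (T + 1)‖]
    _ = _ := by rw [mul_sum]

theorem PiLp.norm_toLp_le_sqrt_card_mul {F ι : Type*} [SeminormedAddCommGroup F] [Fintype ι]
    {v : ι → F} {r : ℝ} (hr : 0 ≤ r) (hv : ∀ i, ‖v i‖ ≤ r) :
    ‖WithLp.toLp 2 v‖ ≤ √(Fintype.card ι) * r := by
  rw [PiLp.norm_eq_of_L2, ← Real.sqrt_sq hr, ← Real.sqrt_mul (Nat.cast_nonneg _)]
  refine Real.sqrt_le_sqrt ?_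
  calc ∑ i, ‖v i‖ ^ 2 ≤ ∑ _i : ι, r ^ 2 := by gcongr with i; exact hv i
    _ = _ := by simp

section InnerProductSpace

variable {E : Type*} [NormedAddCommGroup E] [InnerProductSpace ℝ E]

theorem ConvexOn.sub_le_inner_of_hasGradientAt [CompleteSpace E] {f : E → ℝ} {g x : E}
    (hf : ConvexOn ℝ Set.univ f) (hg : HasGradientAt f g x) (y : E) :
    f x - f y ≤ ⟪g, x - y⟫ := by
  let ℓ : ℝ →ᵃ[ℝ] E := AffineMap.lineMap x y
  have hderiv : HasDerivAt (f ∘ ℓ) ⟪g, y - x⟫ 0 := by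
    have hF := hg.hasFDerivAt
    rw [← AffineMap.lineMap_apply_zero (k := ℝ) x y] at hF
    simpa using hF.comp_hasDerivAt (0 : ℝ) AffineMap.hasDerivAt_lineMap
  have hslope := (hf.comp_affineMap ℓ).le_slope_of_hasDerivAt (Set.mem_univ 0) (Set.mem_univ 1)
    one_pos hderiv
  simp only [slope_def_field, Function.comp_apply, AffineMap.lineMap_apply_one,
    AffineMap.lineMap_apply_zero, sub_zero, div_one, ℓ] at hslope
  rw [← neg_sub y x, inner_neg_right]
  linarith

/-- The three-point inequality of a proximal step. -/
theorem inner_le_of_isMinOn_prox {Ω : Set E} (hΩ : Convex ℝ Ω) {α : ℝ} {g p x q : E}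
    (hx : IsMinOn (fun Q => ⟪Q - p, g⟫ + 1 / (2 * α) * ‖Q - p‖ ^ 2) Ω x) (hxΩ : x ∈ Ω)
    (hq : q ∈ Ω) :
    ⟪g, x - q⟫ ≤ 1 / (2 * α) * (‖q - p‖ ^ 2 - ‖x - p‖ ^ 2 - ‖q - x‖ ^ 2) := by
  have hsub : HasFDerivAt (fun Q : E => Q - p) (ContinuousLinearMap.id ℝ E) x :=
    (hasFDerivAt_id x).sub_const p
  have hderiv := ((hsub.inner ℝ (hasFDerivAt_const g x)).add
    (hsub.norm_sq.const_mul (1 / (2 * α)))).hasFDerivWithinAt (s := Ω)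
  have hopt : 0 ≤ ⟪q - x, g⟫ + 1 / (2 * α) * (2 * ⟪x - p, q - x⟫) := by
    simpa [inner_sub_left] using hx.localize.hasFDerivWithinAt_nonneg hderiv
      (sub_mem_posTangentConeAt_of_segment_subset (hΩ.segment_subset hxΩ hq))
  have hsq : ‖q - p‖ ^ 2 = ‖q - x‖ ^ 2 + 2 * ⟪x - p, q - x⟫ + ‖x - p‖ ^ 2 := by
    rw [real_inner_comm, ← norm_add_sq_real, sub_add_sub_cancel]
  rw [hsq, ← neg_sub q x, inner_neg_right]
  linarith [real_inner_comm g (q - x)]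

theorem sub_le_of_isMinOn_prox [CompleteSpace E] {Ω : Set E} (hΩ : Convex ℝ Ω) {α : ℝ}
    (hα : 0 < α) {f : E → ℝ} {v w p x q : E} (hf : ConvexOn ℝ Set.univ f) (hv : HasGradientAt f v p)
    (hx : IsMinOn (fun Q => ⟪Q - p, v + w⟫ + 1 / (2 * α) * ‖Q - p‖ ^ 2) Ω x) (hxΩ : x ∈ Ω)
    (hq : q ∈ Ω) :
    f p - f q ≤ α / 2 * ‖v + w‖ ^ 2 + 1 / (2 * α) * (‖q - p‖ ^ 2 - ‖q - x‖ ^ 2) + ⟪w, q - p⟫ := by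
  have hconv := hf.sub_le_inner_of_hasGradientAt hv q
  have hprox := inner_le_of_isMinOn_prox hΩ hx hxΩ hq
  have hsplit : ⟪v, p - q⟫ = ⟪v + w, p - x⟫ + ⟪v + w, x - q⟫ + ⟪w, q - p⟫ := by
    simp only [inner_add_left, inner_sub_right]
    ring
  -- Young's inequality absorbs the step length `‖x - p‖` left over by the three-point inequality.
  have hyoung : ⟪v + w, p - x⟫ ≤ α / 2 * ‖v + w‖ ^ 2 + 1 / (2 * α) * ‖x - p‖ ^ 2 := by
    refine (real_inner_le_norm _ _).trans ?_
    rw [norm_sub_rev, div_mul_eq_mul_div, one_div_mul_eq_div,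
      div_add_div _ _ two_ne_zero (by positivity), le_div_iff₀ (by positivity)]
    nlinarith [sq_nonneg (α * ‖v + w‖ - ‖x - p‖)]
  linarith

theorem sum_sub_le_of_isMinOn_prox [CompleteSpace E] {Ω : Set E} (hΩ : Convex ℝ Ω) {R : ℝ}
    (hR : ∀ x ∈ Ω, ∀ y ∈ Ω, ‖x - y‖ ≤ R) {α φ L : ℝ} (hα : 0 < α) {T : ℕ} {f : ℕ → E → ℝ}
    {v w p q : ℕ → E} (hp : ∀ t ∈ Icc 1 (T + 1), p t ∈ Ω) (hq : ∀ t ≤ T, q t ∈ Ω)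
    (hf : ∀ t ∈ Icc 1 T, ConvexOn ℝ Set.univ (f t))
    (hv : ∀ t ∈ Icc 1 T, HasGradientAt (f t) (v t) (p t)) (hvφ : ∀ t ∈ Icc 1 T, ‖v t‖ ≤ φ)
    (hwL : ∀ t ∈ Icc 1 T, ‖w t‖ ≤ L)
    (hmin : ∀ t ∈ Icc 1 T, IsMinOn
      (fun Q => ⟪Q - p t, v t + w t⟫ + 1 / (2 * α) * ‖Q - p t‖ ^ 2) Ω (p (t + 1))) :
    ∑ t ∈ Icc 1 T, (f t (p t) - f t (q t))
      ≤ R / α * ∑ t ∈ Icc 1 T, ‖q t - q (t - 1)‖ + 1 / (2 * α) * ‖p 1 - q 0‖ ^ 2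
        + (φ ^ 2 + L ^ 2) * α * T + ∑ t ∈ Icc 1 T, ⟪w t, q t - p t⟫ := by
  have hstep : ∀ t ∈ Icc 1 T, f t (p t) - f t (q t)
      ≤ (φ ^ 2 + L ^ 2) * α + 1 / (2 * α) * (‖q t - p t‖ ^ 2 - ‖q t - p (t + 1)‖ ^ 2)
        + ⟪w t, q t - p t⟫ := by
    intro t ht
    obtain ⟨h1, htT⟩ := mem_Icc.mp ht
    refine (sub_le_of_isMinOn_prox hΩ hα (hf t ht) (hv t ht) (hmin t ht)
      (hp _ (mem_Icc.mpr ⟨by omega, by omega⟩)) (hq t htT)).trans ?_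
    gcongr ?_ + _ + _
    have hvw := (norm_add_le (v t) (w t)).trans (add_le_add (hvφ t ht) (hwL t ht))
    nlinarith [pow_le_pow_left₀ (norm_nonneg _) hvw 2, sq_nonneg (φ - L)]
  have htel := sum_norm_sq_sub_le (T := T) (p := p) (q := q) fun t ht => by
    obtain ⟨h1, htT⟩ := mem_Icc.mp ht
    have hpt := hp t (mem_Icc.mpr ⟨h1, by omega⟩)
    exact ⟨hR _ (hq t htT) _ hpt, hR _ (hq (t - 1) (by omega)) _ hpt⟩
  have hscale : 1 / (2 * α) * (2 * R * ∑ t ∈ Icc 1 T, ‖q t - q (t - 1)‖ + ‖p 1 - q 0‖ ^ 2)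
      = R / α * ∑ t ∈ Icc 1 T, ‖q t - q (t - 1)‖ + 1 / (2 * α) * ‖p 1 - q 0‖ ^ 2 := by
    field_simp
  calc ∑ t ∈ Icc 1 T, (f t (p t) - f t (q t))
      ≤ ∑ t ∈ Icc 1 T, ((φ ^ 2 + L ^ 2) * α
          + 1 / (2 * α) * (‖q t - p t‖ ^ 2 - ‖q t - p (t + 1)‖ ^ 2) + ⟪w t, q t - p t⟫) :=
        sum_le_sum hstep
    _ = (φ ^ 2 + L ^ 2) * α * T
          + 1 / (2 * α) * ∑ t ∈ Icc 1 T, (‖q t - p t‖ ^ 2 - ‖q t - p (t + 1)‖ ^ 2)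
          + ∑ t ∈ Icc 1 T, ⟪w t, q t - p t⟫ := by
        rw [sum_add_distrib, sum_add_distrib, sum_const, Nat.card_Icc, Nat.add_sub_cancel,
          nsmul_eq_mul, mul_sum, mul_comm]
    _ ≤ _ := by
        rw [← hscale]
        linarith [mul_le_mul_of_nonneg_left htel (by positivity : (0 : ℝ) ≤ 1 / (2 * α))]

theorem PiLp.sum_inner_le_norm_mul_norm {ι : Type*} [Fintype ι] (x y : ι → E) :
    ∑ i, ⟪x i, y i⟫ ≤ ‖WithLp.toLp 2 x‖ * ‖WithLp.toLp 2 y‖ := by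
  simpa [PiLp.inner_apply] using real_inner_le_norm (WithLp.toLp 2 x) (WithLp.toLp 2 y)

theorem PiLp.norm_toLp_sq_eq_sum_inner {ι κ : Type*} [Fintype ι] [Fintype κ]
    (b : OrthonormalBasis κ ℝ E) (y : ι → E) :
    ‖WithLp.toLp 2 y‖ ^ 2 = ∑ k, ‖WithLp.toLp 2 fun i => ⟪b k, y i⟫‖ ^ 2 := by
  simp only [PiLp.norm_sq_eq_of_L2, ← b.sum_sq_norm_inner_right]
  exact Finset.sum_comm

theorem PiLp.norm_toLp_matrix_smul_le [FiniteDimensional ℝ E] {m n : Type*} [Fintype m]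
    [Fintype n] [DecidableEq n] (A : Matrix m n ℝ) (w : n → E) :
    ‖WithLp.toLp 2 fun i => ∑ j, A i j • w j‖
      ≤ ‖(Matrix.toEuclideanLin A).toContinuousLinearMap‖ * ‖WithLp.toLp 2 w‖ := by
  set c := ‖(Matrix.toEuclideanLin A).toContinuousLinearMap‖
  let b := stdOrthonormalBasis ℝ E
  let u : Fin (Module.finrank ℝ E) → EuclideanSpace ℝ n :=
    fun k => WithLp.toLp 2 fun j => ⟪b k, w j⟫
  have hcoord : ∀ k, (WithLp.toLp 2 fun i => ⟪b k, ∑ j, A i j • w j⟫)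
      = Matrix.toEuclideanLin A (u k) := by
    intro k
    ext i
    simp [u, inner_sum, real_inner_smul_right, Matrix.mulVec, dotProduct]
  refine (pow_le_pow_iff_left₀ (norm_nonneg _) (by positivity) two_ne_zero).mp ?_
  calc ‖WithLp.toLp 2 fun i => ∑ j, A i j • w j‖ ^ 2
      = ∑ k, ‖Matrix.toEuclideanLin A (u k)‖ ^ 2 := by
        simp only [PiLp.norm_toLp_sq_eq_sum_inner b, hcoord]
    _ ≤ ∑ k, (c * ‖u k‖) ^ 2 := by
        gcongr with k
        exact (Matrix.toEuclideanLin A).toContinuousLinearMap.le_opNorm (u k)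
    _ = (c * ‖WithLp.toLp 2 w‖) ^ 2 := by
        simp only [mul_pow, ← mul_sum, PiLp.norm_toLp_sq_eq_sum_inner b w, u]

noncomputable section Consensus

variable {M : ℕ}

def average (v : Fin M → E) : E := (M : ℝ)⁻¹ • ∑ i, v i

def disagreement (v : Fin M → E) : ℝ := ‖WithLp.toLp 2 fun i => v i - average v‖

/-- `x j + β • (u j - θ • x j)` is the half-step `λ_j^{t+1/2}` of Algorithm 1. -/
def dualUpdate (W : Matrix (Fin M) (Fin M) ℝ) (β θ : ℝ) (x u : Fin M → E) : Fin M → E :=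
  fun i => ∑ j, W i j • (x j + β • (u j - θ • x j))

theorem natCast_smul_average (v : Fin M → E) : (M : ℝ) • average v = ∑ i, v i := by
  rcases Nat.eq_zero_or_pos M with rfl | hM
  · simp
  · rw [average, smul_smul, mul_inv_cancel₀ (Nat.cast_pos.mpr hM).ne', one_smul]

theorem sum_sub_average (v : Fin M → E) : ∑ i, (v i - average v) = 0 := by
  rw [sum_sub_distrib, sum_const, card_univ, Fintype.card_fin, ← Nat.cast_smul_eq_nsmul ℝ,
    natCast_smul_average, sub_self]

theorem norm_average_le {v : Fin M → E} {r : ℝ} (hr : 0 ≤ r) (hv : ∀ i, ‖v i‖ ≤ r) :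
    ‖average v‖ ≤ r := by
  rcases Nat.eq_zero_or_pos M with rfl | hM
  · simpa [average] using hr
  · have hM' : (0 : ℝ) < M := Nat.cast_pos.mpr hM
    calc ‖average v‖ ≤ (M : ℝ)⁻¹ * ∑ i, ‖v i‖ := by
          rw [average, norm_smul_of_nonneg (by positivity)]
          gcongr
          exact norm_sum_le _ _
      _ ≤ (M : ℝ)⁻¹ * ∑ _i : Fin M, r := by gcongr with i; exact hv i
      _ = r := by simp [hM'.ne']

theorem disagreement_le_of_norm_le {v : Fin M → E} {r : ℝ} (hr : 0 ≤ r) (hv : ∀ i, ‖v i‖ ≤ r) :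
    disagreement v ≤ 2 * √M * r := by
  have h := PiLp.norm_toLp_le_sqrt_card_mul (v := fun i => v i - average v) (by positivity)
    fun i => (norm_sub_le _ _).trans (add_le_add (hv i) (norm_average_le hr hv))
  rw [Fintype.card_fin] at h
  rw [disagreement]
  linarith

theorem sum_inner_eq_sum_inner_sub_average_add (x w : Fin M → E) :
    ∑ i, ⟪x i, w i⟫ = ∑ i, ⟪x i - average x, w i⟫ + ⟪average x, ∑ i, w i⟫ := by
  simp [inner_sub_left, inner_sum]

variable {W : Matrix (Fin M) (Fin M) ℝ} {β θ ψ : ℝ}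

theorem norm_dualUpdate_le (hW : ∀ i j, 0 ≤ W i j) (hrow : ∀ i, ∑ j, W i j = 1) (hβ : 0 ≤ β)
    (hθ : 0 < θ) (hβθ : β * θ ≤ 1) {x u : Fin M → E} (hx : ∀ j, ‖x j‖ ≤ ψ / θ)
    (hu : ∀ j, ‖u j‖ ≤ ψ) (i : Fin M) : ‖dualUpdate W β θ x u i‖ ≤ ψ / θ := by
  have hball : ∀ j, x j + β • (u j - θ • x j) ∈ Metric.closedBall 0 (ψ / θ) := by
    intro j
    have hu' : θ⁻¹ • u j ∈ Metric.closedBall 0 (ψ / θ) := by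
      rw [mem_closedBall_zero_iff, norm_smul_of_nonneg (by positivity), div_eq_inv_mul]
      gcongr
      exact hu j
    convert (convex_closedBall (0 : E) (ψ / θ)) (mem_closedBall_zero_iff.mpr (hx j)) hu'
      (a := 1 - β * θ) (b := β * θ) (by linarith) (by positivity) (by ring) using 1
    rw [smul_smul, mul_assoc, mul_inv_cancel₀ hθ.ne', mul_one]
    module
  rw [← mem_closedBall_zero_iff]
  exact (convex_closedBall 0 (ψ / θ)).sum_mem (fun j _ => hW i j) (hrow i) fun j _ => hball j

theorem average_add_smul_sub (x u : Fin M → E) :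
    average (fun j => x j + β • (u j - θ • x j)) = average x + β • (average u - θ • average x) := by
  simp only [average, sum_add_distrib, ← smul_sum, sum_sub_distrib]
  module

theorem sum_dualUpdate (hcol : ∀ j, ∑ i, W i j = 1) (x u : Fin M → E) :
    ∑ i, dualUpdate W β θ x u i = ∑ j, (x j + β • (u j - θ • x j)) := by
  simp only [dualUpdate]
  rw [sum_comm]
  simp only [← sum_smul, hcol, one_smul]

theorem average_dualUpdate (hcol : ∀ j, ∑ i, W i j = 1) (x u : Fin M → E) :
    average (dualUpdate W β θ x u) = average x + β • (average u - θ • average x) := by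
  rw [← average_add_smul_sub, average, sum_dualUpdate hcol]
  rfl

theorem disagreement_dualUpdate_le [FiniteDimensional ℝ E] (hrow : ∀ i, ∑ j, W i j = 1)
    (hcol : ∀ j, ∑ i, W i j = 1) (hβ : 0 ≤ β) (hθ : 0 ≤ θ) (hβθ : β * θ ≤ 1) (x u : Fin M → E) :
    disagreement (dualUpdate W β θ x u)
      ≤ ‖(Matrix.toEuclideanLin (W - Matrix.of fun _ _ => (M : ℝ)⁻¹)).toContinuousLinearMap‖
        * (disagreement x + β * disagreement u) := by
  set A : Matrix (Fin M) (Fin M) ℝ := W - Matrix.of fun _ _ => (M : ℝ)⁻¹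
  set y : Fin M → E := fun j => x j + β • (u j - θ • x j)
  -- The rows of `A` sum to zero, so `A` only sees the deviation of `y` from its average.
  have hdev : ∀ i, dualUpdate W β θ x u i - average (dualUpdate W β θ x u)
      = ∑ j, A i j • (y j - average y) := by
    intro i
    have hav : average (dualUpdate W β θ x u) = average y := by
      rw [average, sum_dualUpdate hcol]
      rfl
    have hsplit : ∑ j, A i j • (y j - average y)
        = ∑ j, W i j • (y j - average y) - (M : ℝ)⁻¹ • ∑ j, (y j - average y) := by
      rw [smul_sum, ← sum_sub_distrib]
      simp only [A, Matrix.sub_apply, Matrix.of_apply, sub_smul]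
    rw [hsplit, sum_sub_average, smul_zero, sub_zero, hav]
    simp only [smul_sub, sum_sub_distrib, ← sum_smul, hrow, one_smul]
    rfl
  have hy : (fun j => y j - average y)
      = (1 - β * θ) • (fun j => x j - average x) + β • fun j => u j - average u := by
    ext1 j
    simp only [y, average_add_smul_sub, Pi.add_apply, Pi.smul_apply]
    module
  calc disagreement (dualUpdate W β θ x u)
      = ‖WithLp.toLp 2 fun i => ∑ j, A i j • (y j - average y)‖ := by
        simp only [disagreement, hdev]
    _ ≤ _ * ‖WithLp.toLp 2 fun j => y j - average y‖ := PiLp.norm_toLp_matrix_smul_le _ _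
    _ ≤ _ * ((1 - β * θ) * disagreement x + β * disagreement u) := by
        rw [hy, WithLp.toLp_add, WithLp.toLp_smul, WithLp.toLp_smul]
        gcongr
        refine (norm_add_le _ _).trans_eq ?_
        rw [norm_smul_of_nonneg (by linarith), norm_smul_of_nonneg hβ, disagreement, disagreement]
    _ ≤ _ * (disagreement x + β * disagreement u) := by
        gcongr
        exact mul_le_of_le_one_left (norm_nonneg _) (by nlinarith)

theorem neg_inner_le_of_dualStep (hβ : 0 < β) (hθ : 0 ≤ θ) (hβθ : β * θ ≤ 1) {l g : E}
    (hg : ‖g‖ ≤ ψ) :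
    -⟪l, g⟫ ≤ (‖l‖ ^ 2 - ‖l + β • (g - θ • l)‖ ^ 2) / (2 * β) + β * ψ ^ 2 := by
  rw [div_add' _ _ _ (by positivity), le_div_iff₀ (by positivity)]
  have hexp : ‖l + β • (g - θ • l)‖ ^ 2
      = (1 - β * θ) ^ 2 * ‖l‖ ^ 2 + 2 * ((1 - β * θ) * β) * ⟪l, g⟫ + β ^ 2 * ‖g‖ ^ 2 := by
    rw [show l + β • (g - θ • l) = (1 - β * θ) • l + β • g by module, norm_add_sq_real,
      norm_smul, norm_smul, real_inner_smul_left, real_inner_smul_right, mul_pow, mul_pow,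
      Real.norm_eq_abs, Real.norm_eq_abs, sq_abs, sq_abs]
    ring
  have hcs := neg_le_of_abs_le (abs_real_inner_le_norm l g)
  rw [hexp]
  nlinarith [mul_nonneg (mul_nonneg hβ.le hθ) (mul_nonneg (sub_nonneg.2 hβθ) (sq_nonneg ‖l‖)),
    mul_nonneg (sq_nonneg β) (sq_nonneg (θ * ‖l‖ - ‖g‖)),
    mul_le_mul_of_nonneg_left (pow_le_pow_left₀ (norm_nonneg g) hg 2) (sq_nonneg β),
    mul_le_mul_of_nonneg_left hcs (mul_nonneg (sq_nonneg β) hθ)]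

theorem sum_inner_sub_le (hcol : ∀ j, ∑ i, W i j = 1) (hβ : 0 < β) (hθ : 0 ≤ θ)
    (hβθ : β * θ ≤ 1) (hψ : 0 ≤ ψ) {x u v : Fin M → E} (hv : ∑ i, v i = 0)
    (hvψ : ∀ i, ‖v i‖ ≤ ψ) (hu : ∀ i, ‖u i‖ ≤ ψ) :
    ∑ i, ⟪x i, v i - u i⟫
      ≤ disagreement x * (2 * √M * ψ)
        + M * ((‖average x‖ ^ 2 - ‖average (dualUpdate W β θ x u)‖ ^ 2) / (2 * β) + β * ψ ^ 2) := by
  rw [sum_inner_eq_sum_inner_sub_average_add, sum_sub_distrib, hv, zero_sub, inner_neg_right,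
    ← natCast_smul_average u, real_inner_smul_right, ← mul_neg]
  gcongr ?_ + ?_
  · refine (PiLp.sum_inner_le_norm_mul_norm _ _).trans
      (mul_le_mul_of_nonneg_left ?_ (norm_nonneg _))
    have h := PiLp.norm_toLp_le_sqrt_card_mul (by positivity)
      fun i => (norm_sub_le (v i) (u i)).trans (add_le_add (hvψ i) (hu i))
    rw [Fintype.card_fin] at h
    linarith
  · rw [average_dualUpdate hcol]
    gcongr
    exact neg_inner_le_of_dualStep hβ hθ hβθ (norm_average_le hψ hu)

section Trajectory

variable {T : ℕ} {x u : ℕ → Fin M → E}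

theorem norm_le_of_dualUpdate (hW : ∀ i j, 0 ≤ W i j) (hrow : ∀ i, ∑ j, W i j = 1) (hβ : 0 ≤ β)
    (hθ : 0 < θ) (hβθ : β * θ ≤ 1) (hψ : 0 ≤ ψ) (hx0 : x 0 = 0)
    (hstep : ∀ t ≤ T, x (t + 1) = dualUpdate W β θ (x t) (u t))
    (hu : ∀ t ≤ T, ∀ i, ‖u t i‖ ≤ ψ) : ∀ t ≤ T + 1, ∀ i, ‖x t i‖ ≤ ψ / θ := by
  intro t ht
  induction t with
  | zero => intro i; simpa [hx0] using div_nonneg hψ hθ.le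
  | succ t ih =>
    rw [hstep t (by omega)]
    exact norm_dualUpdate_le hW hrow hβ hθ hβθ (ih (by omega)) (hu t (by omega))

theorem disagreement_le_of_dualUpdate [FiniteDimensional ℝ E] (hrow : ∀ i, ∑ j, W i j = 1)
    (hcol : ∀ j, ∑ i, W i j = 1) (hβ : 0 ≤ β) (hθ : 0 ≤ θ) (hβθ : β * θ ≤ 1) (hψ : 0 ≤ ψ)
    {ε : ℝ} (hε : ε = 1 - ‖(Matrix.toEuclideanLin
      (W - Matrix.of fun _ _ => (M : ℝ)⁻¹)).toContinuousLinearMap‖ ^ 2) (hε0 : 0 < ε)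
    (hx0 : x 0 = 0) (hstep : ∀ t ≤ T, x (t + 1) = dualUpdate W β θ (x t) (u t))
    (hu : ∀ t ≤ T, ∀ i, ‖u t i‖ ≤ ψ) :
    ∀ t ≤ T + 1, disagreement (x t) ≤ 2 * √M * ψ * β / (ε * √ε) := by
  set c := ‖(Matrix.toEuclideanLin (W - Matrix.of fun _ _ => (M : ℝ)⁻¹)).toContinuousLinearMap‖
  have hcube : ε * √ε = √ε ^ 3 := by
    rw [pow_succ, Real.sq_sqrt hε0.le]
  have hcontract := mul_one_add_pow_three_le_one (norm_nonneg _) (Real.sqrt_nonneg ε)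
    (by rw [Real.sq_sqrt hε0.le, hε]; ring)
  refine le_of_le_mul_add_step (a := β * (2 * √M * ψ)) (c := c) (norm_nonneg _) ?_ ?_ fun t ht => ?_
  · have h0 : disagreement (x 0) = 0 := by
      simp [disagreement, hx0, average, ← Pi.zero_def]
    rw [h0]
    positivity
  · rw [hcube]
    calc c * (2 * √M * ψ * β / √ε ^ 3 + β * (2 * √M * ψ))
        = c * (1 + √ε ^ 3) * (2 * √M * ψ * β / √ε ^ 3) := by
          field_simp
      _ ≤ 1 * (2 * √M * ψ * β / √ε ^ 3) := by gcongr
      _ = _ := one_mul _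
  · rw [hstep t ht]
    refine (disagreement_dualUpdate_le hrow hcol hβ hθ hβθ _ _).trans ?_
    gcongr
    exact disagreement_le_of_norm_le hψ (hu t ht)

theorem sum_inner_sub_le_of_dualUpdate [FiniteDimensional ℝ E] (hrow : ∀ i, ∑ j, W i j = 1)
    (hcol : ∀ j, ∑ i, W i j = 1) (hβ : 0 < β) (hθ : 0 ≤ θ) (hβθ : β * θ ≤ 1) (hψ : 0 ≤ ψ)
    {ε : ℝ} (hε : ε = 1 - ‖(Matrix.toEuclideanLin
      (W - Matrix.of fun _ _ => (M : ℝ)⁻¹)).toContinuousLinearMap‖ ^ 2) (hε0 : 0 < ε)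
    (hx0 : x 0 = 0) (hstep : ∀ t ≤ T, x (t + 1) = dualUpdate W β θ (x t) (u t))
    (hu : ∀ t ≤ T, ∀ i, ‖u t i‖ ≤ ψ) {v : ℕ → Fin M → E} (hv : ∀ t ∈ Icc 1 T, ∑ i, v t i = 0)
    (hvψ : ∀ t ∈ Icc 1 T, ∀ i, ‖v t i‖ ≤ ψ) :
    ∑ t ∈ Icc 1 T, ∑ i, ⟪x t i, v t i - u t i⟫
      ≤ (4 * ψ ^ 2 * M / (ε * √ε) + 2 * ψ ^ 2 * M) * β * T := by
  rcases Nat.eq_zero_or_pos T with rfl | hT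
  · simp
  set A := 4 * ψ ^ 2 * M / (ε * √ε) * β with hA
  have hdis := disagreement_le_of_dualUpdate hrow hcol hβ.le hθ hβθ hψ hε hε0 hx0 hstep hu
  have hper : ∀ t ∈ Icc 1 T, ∑ i, ⟪x t i, v t i - u t i⟫
      ≤ A + M * ((‖average (x t)‖ ^ 2 - ‖average (x (t + 1))‖ ^ 2) / (2 * β) + β * ψ ^ 2) := by
    intro t ht
    have htT := (mem_Icc.mp ht).2
    rw [hstep t htT]
    refine (sum_inner_sub_le hcol hβ hθ hβθ hψ (hv t ht) (hvψ t ht) (hu t htT)).trans ?_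
    gcongr
    calc disagreement (x t) * (2 * √M * ψ)
        ≤ 2 * √M * ψ * β / (ε * √ε) * (2 * √M * ψ) := by gcongr; exact hdis t (by omega)
      _ = A := by
        rw [hA]
        linear_combination (4 * ψ ^ 2 * β / (ε * √ε)) * Real.mul_self_sqrt (Nat.cast_nonneg M)
  have hx1 : ‖average (x 1)‖ ≤ β * ψ := by
    have h0 : average (x 0) = 0 := by simp [average, hx0]
    rw [hstep 0 (Nat.zero_le T), average_dualUpdate hcol, h0, smul_zero, sub_zero, zero_add,
      norm_smul_of_nonneg hβ.le]
    gcongr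
    exact norm_average_le hψ (hu 0 (Nat.zero_le T))
  have hT1 : (1 : ℝ) ≤ T := by exact_mod_cast hT
  calc ∑ t ∈ Icc 1 T, ∑ i, ⟪x t i, v t i - u t i⟫
      ≤ ∑ t ∈ Icc 1 T,
          (A + M * ((‖average (x t)‖ ^ 2 - ‖average (x (t + 1))‖ ^ 2) / (2 * β) + β * ψ ^ 2)) :=
        sum_le_sum hper
    _ = ∑ t ∈ Icc 1 T, (A + M * β * ψ ^ 2)
          + M / (2 * β) * ∑ t ∈ Icc 1 T, (‖average (x t)‖ ^ 2 - ‖average (x (t + 1))‖ ^ 2) := by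
        rw [mul_sum, ← sum_add_distrib]
        exact sum_congr rfl fun t _ => by ring
    _ = T * (A + M * β * ψ ^ 2)
          + M / (2 * β) * (‖average (x 1)‖ ^ 2 - ‖average (x (T + 1))‖ ^ 2) := by
        rw [sum_const, Nat.card_Icc, Nat.add_sub_cancel, nsmul_eq_mul,
          sum_Icc_sub_succ (fun t => ‖average (x t)‖ ^ 2)]
    _ ≤ T * (A + M * β * ψ ^ 2) + M / (2 * β) * (β * ψ) ^ 2 := by
        gcongr
        linarith [sq_nonneg ‖average (x (T + 1))‖, pow_le_pow_left₀ (norm_nonneg _) hx1 2]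
    _ ≤ (4 * ψ ^ 2 * M / (ε * √ε) + 2 * ψ ^ 2 * M) * β * T := by
        have hhalf : M / (2 * β) * (β * ψ) ^ 2 = M * β * ψ ^ 2 / 2 := by
          field_simp
        rw [hhalf, hA]
        nlinarith [mul_le_mul_of_nonneg_left hT1 (by positivity : (0 : ℝ) ≤ M * β * ψ ^ 2)]

end Trajectory

end Consensus

end InnerProductSpace

theorem attack_free_dynamic_regret_bound_general
    (d M T : ℕ) (hM : 1 ≤ M)
    -- local constraint sets
    (Ω : Fin M → Set (EuclideanSpace ℝ (Fin d)))
    (hΩconv : ∀ i, Convex ℝ (Ω i))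
    (R : ℝ) (hR : ∀ i, ∀ x ∈ Ω i, ∀ y ∈ Ω i, ‖x - y‖ ≤ R)
    -- cost functions and their gradients
    (C : Fin M → ℕ → EuclideanSpace ℝ (Fin d) → ℝ)
    (gradC : Fin M → ℕ → EuclideanSpace ℝ (Fin d) → EuclideanSpace ℝ (Fin d))
    (hCconv : ∀ i, ∀ t ≤ T, ConvexOn ℝ Set.univ (C i t))
    (hCgrad : ∀ i, ∀ t ≤ T, ∀ x, HasGradientAt (C i t) (gradC i t x) x)
    (φ : ℝ) (hφ : ∀ i, ∀ t ≤ T, ∀ x ∈ Ω i, ‖gradC i t x‖ ≤ φ)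
    -- demands and local constraint functions
    (D : ℕ → EuclideanSpace ℝ (Fin d))
    (Gt : Fin M → ℕ → EuclideanSpace ℝ (Fin d) → EuclideanSpace ℝ (Fin d))
    (hGt : ∀ i t P, Gt i t P = (M : ℝ)⁻¹ • (P - D t))
    (ψt : ℝ) (hψt : ∀ i, ∀ t ≤ T, ∀ P ∈ Ω i, ‖Gt i t P‖ ≤ ψt)
    -- doubly stochastic weight matrix with spectral-gap condition
    (Et : Matrix (Fin M) (Fin M) ℝ)
    (hEnn : ∀ i j, 0 ≤ Et i j)
    (hErow : ∀ i, ∑ j, Et i j = 1)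
    (hEcol : ∀ j, ∑ i, Et i j = 1)
    (κt : ℝ)
    (hκt : κt = ‖LinearMap.toContinuousLinearMap
        (Matrix.toEuclideanLin (Et - Matrix.of fun _ _ => (M : ℝ)⁻¹))‖ ^ 2)
    (hκtlt : κt < 1)
    (εt : ℝ) (hεt : εt = 1 - κt)
    -- step sizes and regularization parameter
    (α β θ : ℝ) (hα : 0 < α) (hβ : 0 < β) (hθ : 0 < θ) (hβθ : β * θ ≤ 1)
    -- iterates of Algorithm 1
    (P lam lamhalf : Fin M → ℕ → EuclideanSpace ℝ (Fin d))
    (hP0 : ∀ i, P i 0 ∈ Ω i)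
    (hlam0 : ∀ i, lam i 0 = 0)
    (hPmem : ∀ i, ∀ t ≤ T, P i (t + 1) ∈ Ω i)
    (hPmin : ∀ i, ∀ t ≤ T, ∀ Q ∈ Ω i,
      ⟪P i (t + 1) - P i t, gradC i t (P i t) + (M : ℝ)⁻¹ • lam i t⟫
          + (1 / (2 * α)) * ‖P i (t + 1) - P i t‖ ^ 2
        ≤ ⟪Q - P i t, gradC i t (P i t) + (M : ℝ)⁻¹ • lam i t⟫
          + (1 / (2 * α)) * ‖Q - P i t‖ ^ 2)
    (hlamhalf : ∀ i, ∀ t ≤ T,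
      lamhalf i t = lam i t + β • (Gt i t (P i t) - θ • lam i t))
    (hlamstep : ∀ i, ∀ t ≤ T, lam i (t + 1) = ∑ j, Et i j • lamhalf j t)
    -- comparator sequence
    (Pstar : Fin M → ℕ → EuclideanSpace ℝ (Fin d))
    (hPstar : ∀ i, ∀ t ≤ T, Pstar i t ∈ Ω i)
    (hPstarG : ∀ t ∈ Finset.Icc 1 T, ∑ i, Gt i t (Pstar i t) = 0) :
    ∑ t ∈ Finset.Icc 1 T, ∑ i, (C i t (P i t) - C i t (Pstar i t))
      ≤ (R / α) * ∑ t ∈ Finset.Icc 1 T, ∑ i, ‖Pstar i t - Pstar i (t - 1)‖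
        + (1 / (2 * α)) * ∑ i, ‖P i 1 - Pstar i 0‖ ^ 2
        + φ ^ 2 * (M : ℝ) * α * (T : ℝ)
        + (4 * ψt ^ 2 * (M : ℝ) / (εt * Real.sqrt εt) + 2 * ψt ^ 2 * (M : ℝ))
            * β * (T : ℝ)
        + (ψt ^ 2 / (M : ℝ)) * α * (T : ℝ) / θ ^ 2 := by
  have hψ : 0 ≤ ψt := (norm_nonneg _).trans (hψt ⟨0, hM⟩ 0 T.zero_le _ (hP0 ⟨0, hM⟩))
  have hPΩ : ∀ i, ∀ t ≤ T + 1, P i t ∈ Ω i := fun i t ht => by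
    rcases t with _ | t
    exacts [hP0 i, hPmem i t (by omega)]
  have hGP : ∀ t ≤ T, ∀ i, ‖Gt i t (P i t)‖ ≤ ψt := fun t ht i => hψt i t ht _ (hPΩ i t (by omega))
  have hdyn : ∀ t ≤ T, (fun i => lam i (t + 1))
      = dualUpdate Et β θ (fun i => lam i t) fun i => Gt i t (P i t) := fun t ht => by
    ext1 i
    simp only [hlamstep i t ht, dualUpdate, hlamhalf _ t ht]
  have hlam := norm_le_of_dualUpdate (x := fun t i => lam i t) hEnn hErow hβ.le hθ hβθ hψ
    (funext hlam0) hdyn hGP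
  have hIcc : ∀ t ∈ Icc 1 T, t ≤ T := fun t ht => (mem_Icc.mp ht).2
  have hdual := sum_inner_sub_le_of_dualUpdate (x := fun t i => lam i t)
    (v := fun t i => Gt i t (Pstar i t)) hErow hEcol hβ hθ.le hβθ hψ (ε := εt) (by rw [hεt, hκt])
    (by linarith) (funext hlam0) hdyn hGP hPstarG
    fun t ht i => hψt i t (hIcc t ht) _ (hPstar i t (hIcc t ht))
  have hprimal := fun i => sum_sub_le_of_isMinOn_prox (hΩconv i) (hR i) hα
    (fun t ht => hPΩ i t (mem_Icc.mp ht).2) (hPstar i) (fun t ht => hCconv i t (hIcc t ht))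
    (fun t ht => hCgrad i t (hIcc t ht) _)
    (fun t ht => hφ i t (hIcc t ht) _ (hPΩ i t (hIcc t ht).step))
    (w := fun t => (M : ℝ)⁻¹ • lam i t) (L := (M : ℝ)⁻¹ * (ψt / θ))
    (fun t ht => by
      rw [norm_smul_of_nonneg (by positivity)]
      exact mul_le_mul_of_nonneg_left (hlam t (hIcc t ht).step i) (by positivity))
    (fun t ht => hPmin i t (hIcc t ht))
  have hcoupling : ∀ i t, ⟪(M : ℝ)⁻¹ • lam i t, Pstar i t - P i t⟫
      = ⟪lam i t, Gt i t (Pstar i t) - Gt i t (P i t)⟫ := fun i t => by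
    rw [hGt, hGt, ← smul_sub, real_inner_smul_left, real_inner_smul_right,
      sub_sub_sub_cancel_right]
  have hconst : (φ ^ 2 + ((M : ℝ)⁻¹ * (ψt / θ)) ^ 2) * α * (M * T)
      = φ ^ 2 * M * α * T + ψt ^ 2 / M * α * T / θ ^ 2 := by
    field_simp
  rw [sum_comm]
  refine (sum_le_sum fun i _ => hprimal i).trans ?_
  simp only [sum_add_distrib, hcoupling, ← mul_sum, sum_const, card_univ, Fintype.card_fin,
    nsmul_eq_mul]
  rw [hconst, sum_comm (s := univ), sum_comm (s := univ)]
  linarith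

/-- **Dynamic-regret bound for the attack-free decentralized online resource
allocation algorithm (Algorithm 1).** -/
theorem attack_free_dynamic_regret_bound
    (d M T : ℕ) (hM : 1 ≤ M) (hT : 1 ≤ T)
    -- local constraint sets
    (Ω : Fin M → Set (EuclideanSpace ℝ (Fin d)))
    (hΩne : ∀ i, (Ω i).Nonempty)
    (hΩcomp : ∀ i, IsCompact (Ω i))
    (hΩconv : ∀ i, Convex ℝ (Ω i))
    (R : ℝ) (hR : ∀ i, ∀ x ∈ Ω i, ∀ y ∈ Ω i, ‖x - y‖ ≤ R)
    -- cost functions and their gradients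
    (C : Fin M → ℕ → EuclideanSpace ℝ (Fin d) → ℝ)
    (gradC : Fin M → ℕ → EuclideanSpace ℝ (Fin d) → EuclideanSpace ℝ (Fin d))
    (hCconv : ∀ i, ∀ t ≤ T, ConvexOn ℝ Set.univ (C i t))
    (hCgrad : ∀ i, ∀ t ≤ T, ∀ x, HasGradientAt (C i t) (gradC i t x) x)
    (φ : ℝ) (hφ : ∀ i, ∀ t ≤ T, ∀ x ∈ Ω i, ‖gradC i t x‖ ≤ φ)
    -- demands and local constraint functions
    (D : ℕ → EuclideanSpace ℝ (Fin d))
    (Gt : Fin M → ℕ → EuclideanSpace ℝ (Fin d) → EuclideanSpace ℝ (Fin d))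
    (hGt : ∀ i t P, Gt i t P = (M : ℝ)⁻¹ • (P - D t))
    (ψt : ℝ) (hψt : ∀ i, ∀ t ≤ T, ∀ P ∈ Ω i, ‖Gt i t P‖ ≤ ψt)
    -- doubly stochastic weight matrix with spectral-gap condition
    (Et : Matrix (Fin M) (Fin M) ℝ)
    (hEnn : ∀ i j, 0 ≤ Et i j)
    (hErow : ∀ i, ∑ j, Et i j = 1)
    (hEcol : ∀ j, ∑ i, Et i j = 1)
    (κt : ℝ)
    (hκt : κt = ‖LinearMap.toContinuousLinearMap
        (Matrix.toEuclideanLin (Et - Matrix.of fun _ _ => (M : ℝ)⁻¹))‖ ^ 2)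
    (hκtlt : κt < 1)
    (εt : ℝ) (hεt : εt = 1 - κt)
    -- step sizes and regularization parameter
    (α β θ : ℝ) (hα : 0 < α) (hβ : 0 < β) (hθ : 0 < θ) (hβθ : β * θ ≤ 1)
    -- iterates of Algorithm 1
    (P lam lamhalf : Fin M → ℕ → EuclideanSpace ℝ (Fin d))
    (hP0 : ∀ i, P i 0 ∈ Ω i)
    (hlam0 : ∀ i, lam i 0 = 0)
    (hPmem : ∀ i, ∀ t ≤ T, P i (t + 1) ∈ Ω i)
    (hPmin : ∀ i, ∀ t ≤ T, ∀ Q ∈ Ω i,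
      ⟪P i (t + 1) - P i t, gradC i t (P i t) + (M : ℝ)⁻¹ • lam i t⟫
          + (1 / (2 * α)) * ‖P i (t + 1) - P i t‖ ^ 2
        ≤ ⟪Q - P i t, gradC i t (P i t) + (M : ℝ)⁻¹ • lam i t⟫
          + (1 / (2 * α)) * ‖Q - P i t‖ ^ 2)
    (hlamhalf : ∀ i, ∀ t ≤ T,
      lamhalf i t = lam i t + β • (Gt i t (P i t) - θ • lam i t))
    (hlamstep : ∀ i, ∀ t ≤ T, lam i (t + 1) = ∑ j, Et i j • lamhalf j t)
    -- comparator sequence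
    (Pstar : Fin M → ℕ → EuclideanSpace ℝ (Fin d))
    (hPstar : ∀ i, ∀ t ≤ T, Pstar i t ∈ Ω i)
    (hPstarG : ∀ t ∈ Finset.Icc 1 T, ∑ i, Gt i t (Pstar i t) = 0) :
    ∑ t ∈ Finset.Icc 1 T, ∑ i, (C i t (P i t) - C i t (Pstar i t))
      ≤ (R / α) * ∑ t ∈ Finset.Icc 1 T, ∑ i, ‖Pstar i t - Pstar i (t - 1)‖
        + (1 / (2 * α)) * ∑ i, ‖P i 1 - Pstar i 0‖ ^ 2
        + φ ^ 2 * (M : ℝ) * α * (T : ℝ)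
        + (4 * ψt ^ 2 * (M : ℝ) / (εt * Real.sqrt εt) + 2 * ψt ^ 2 * (M : ℝ))
            * β * (T : ℝ)
        + (ψt ^ 2 / (M : ℝ)) * α * (T : ℝ) / θ ^ 2 :=
  attack_free_dynamic_regret_bound_general d M T hM Ω hΩconv R hR C gradC hCconv hCgrad φ hφ D Gt
    hGt ψt hψt Et hEnn hErow hEcol κt hκt hκtlt εt hεt α β θ hα hβ hθ hβθ P lam lamhalf hP0 hlam0
    hPmem hPmin hlamhalf hlamstep Pstar hPstar hPstarG
end

section
/- In the above setup (only the norm condition (Property 2) on the aggregation outputs is assumed), for every benign agent i ∈ {1,…,H} and every t ∈ ℕ it holds that ‖λ_i^{t+1/2}‖ ≤ ψ/θ and ‖λ_i^{t+1}‖ ≤ ψ/θ. -/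
/-! The radius `ψ / θ` is the fixed point of `r ↦ (1 - βθ) r + βψ`, so the half-step maps the
closed ball of that radius into itself (since `H / M ≤ 1`), and by Property 2 the aggregation
step never leaves the ball spanned by the half-steps of the neighbours. Induction on `t`,
starting from `λ⁰ = 0`, keeps every iterate in the ball. -/

theorem norm_damped_step_le {E : Type*} [SeminormedAddCommGroup E] [NormedSpace ℝ E]
    {β θ c ψ : ℝ} (hβ : 0 ≤ β) (hθ : 0 < θ) (hβθ : β * θ ≤ 1) (hc₀ : 0 ≤ c) (hc₁ : c ≤ 1)
    {x v : E} (hx : ‖x‖ ≤ ψ / θ) (hv : ‖v‖ ≤ ψ) :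
    ‖(1 - β * θ) • x + (β * c) • v‖ ≤ ψ / θ := by
  have hcv : c * ‖v‖ ≤ ψ := (mul_le_of_le_one_left (norm_nonneg v) hc₁).trans hv
  calc ‖(1 - β * θ) • x + (β * c) • v‖
      ≤ ‖(1 - β * θ) • x‖ + ‖(β * c) • v‖ := norm_add_le _ _
    _ = (1 - β * θ) * ‖x‖ + β * (c * ‖v‖) := by
      rw [norm_smul_of_nonneg (by linarith), norm_smul_of_nonneg (by positivity), mul_assoc]
    _ ≤ (1 - β * θ) * (ψ / θ) + β * ψ := by
      gcongr
    _ = ψ / θ := by field_simp; ring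

theorem dual_variables_bounded_byzantine_general
    (d H M : ℕ) (hHM : H ≤ M)
    (β θ : ℝ) (hβ : 0 < β) (hθ : 0 < θ) (hβθ : β * θ ≤ 1)
    (ψ : ℝ) (hψ : 0 ≤ ψ)
    (g : Fin H → ℕ → EuclideanSpace ℝ (Fin d))
    (hg : ∀ i t, ‖g i t‖ ≤ ψ)
    (lam lamhalf : Fin H → ℕ → EuclideanSpace ℝ (Fin d))
    (hlam0 : ∀ i, lam i 0 = 0)
    (hlamhalf : ∀ i t,
      lamhalf i t = (1 - β * θ) • lam i t + (β * ((H : ℝ) / M)) • g i t)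
    (S : Fin H → Finset (Fin H)) (hS : ∀ i, (S i).Nonempty)
    (hProp2 : ∀ i t,
      ‖lam i (t + 1)‖ ≤ (S i).sup' (hS i) fun j => ‖lamhalf j t‖) :
    ∀ i t, ‖lamhalf i t‖ ≤ ψ / θ ∧ ‖lam i (t + 1)‖ ≤ ψ / θ := by
  have hHM₁ : (H : ℝ) / M ≤ 1 := div_le_one_of_le₀ (by exact_mod_cast hHM) M.cast_nonneg
  have half_le : ∀ i t, ‖lam i t‖ ≤ ψ / θ → ‖lamhalf i t‖ ≤ ψ / θ := fun i t h => by
    rw [hlamhalf]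
    exact norm_damped_step_le hβ.le hθ hβθ (by positivity) hHM₁ h (hg i t)
  have lam_le : ∀ t i, ‖lam i t‖ ≤ ψ / θ := by
    intro t
    induction t with
    | zero => intro i; rw [hlam0, norm_zero]; positivity
    | succ t ih =>
      intro i
      exact (hProp2 i t).trans (Finset.sup'_le _ _ fun j _ => half_le j t (ih j))
  exact fun i t => ⟨half_le i t (lam_le t i), lam_le (t + 1) i⟩

/-- **Boundedness of the benign dual variables under the norm condition
(Property 2) of the robust aggregation rule (Lemma 2).** -/
theorem dual_variables_bounded_byzantine
    (d H M : ℕ) (hH : 1 ≤ H) (hHM : H ≤ M)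
    (β θ : ℝ) (hβ : 0 < β) (hθ : 0 < θ) (hβθ : β * θ ≤ 1)
    (ψ : ℝ) (hψ : 0 ≤ ψ)
    (g : Fin H → ℕ → EuclideanSpace ℝ (Fin d))
    (hg : ∀ i t, ‖g i t‖ ≤ ψ)
    (lam lamhalf : Fin H → ℕ → EuclideanSpace ℝ (Fin d))
    (hlam0 : ∀ i, lam i 0 = 0)
    (hlamhalf : ∀ i t,
      lamhalf i t = (1 - β * θ) • lam i t + (β * ((H : ℝ) / M)) • g i t)
    (S : Fin H → Finset (Fin H)) (hS : ∀ i, (S i).Nonempty)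
    (hProp2 : ∀ i t,
      ‖lam i (t + 1)‖ ≤ (S i).sup' (hS i) fun j => ‖lamhalf j t‖) :
    ∀ i t, ‖lamhalf i t‖ ≤ ψ / θ ∧ ‖lam i (t + 1)‖ ≤ ψ / θ :=
  dual_variables_bounded_byzantine_general d H M hHM β θ hβ hθ hβθ ψ hψ g hg lam lamhalf hlam0
    hlamhalf S hS hProp2
end

section
/- Let H ≥ 1, M > 0, ψ ≥ 0, and let β ≥ 0, θ ≥ 0 satisfy 0 ≤ βθ ≤ 2. Let (λ_i)_{i=1}^H and (g_i)_{i=1}^H be families of vectors in ℝ^d with ‖g_i‖ ≤ ψ for every i, and define λ_i' := (1 − βθ)·λ_i + β·(H/M)·g_i. Write λ̄ := (1/H)Σ_{i=1}^H λ_i and λ̄' := (1/H)Σ_{i=1}^H λ_i'. Then for every u ∈ (0,1): Σ_{i=1}^H ‖λ_i' − λ̄'‖² ≤ (1/(1−u))·Σ_{i=1}^H ‖λ_i − λ̄‖² + 4H³β²ψ²/(u·M²). -/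
/-- Young-type inequality for norms of sums. -/
lemma young_norm_sq {E : Type*} [NormedAddCommGroup E] (x y : E) {u : ℝ}
    (hu : 0 < u) (hu1 : u < 1) :
    ‖x + y‖ ^ 2 ≤ (1 / (1 - u)) * ‖x‖ ^ 2 + (1 / u) * ‖y‖ ^ 2 := by
  have h1 : ‖x + y‖ ≤ ‖x‖ + ‖y‖ := norm_add_le x y
  have hx : 0 ≤ ‖x‖ := norm_nonneg x
  have hy : 0 ≤ ‖y‖ := norm_nonneg y
  have h2 : ‖x + y‖ ^ 2 ≤ (‖x‖ + ‖y‖) ^ 2 := by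
    apply pow_le_pow_left₀ (norm_nonneg _) h1
  have h3 : (‖x‖ + ‖y‖) ^ 2 ≤ (1 / (1 - u)) * ‖x‖ ^ 2 + (1 / u) * ‖y‖ ^ 2 := by
    rw [div_mul_eq_mul_div, div_mul_eq_mul_div, div_add_div _ _ (by linarith) (by linarith),
      le_div_iff₀ (by nlinarith)]
    nlinarith [sq_nonneg (u * ‖x‖ - (1 - u) * ‖y‖)]
  linarith

set_option maxHeartbeats 1000000 in
/-- **One half-step disagreement growth bound for the dual update of
Algorithm 2 (Lemma 3).** -/
theorem half_step_disagreement_bound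
    (d H M : ℕ) (hH : 1 ≤ H) (hM : 0 < M)
    (ψ : ℝ) (hψ : 0 ≤ ψ)
    (β θ : ℝ) (hβ : 0 ≤ β) (hθ : 0 ≤ θ) (hβθ : β * θ ≤ 2)
    (lam g lam' : Fin H → EuclideanSpace ℝ (Fin d))
    (hg : ∀ i, ‖g i‖ ≤ ψ)
    (hlam' : ∀ i, lam' i = (1 - β * θ) • lam i + (β * ((H : ℝ) / M)) • g i) :
    ∀ u ∈ Set.Ioo (0 : ℝ) 1,
      ∑ i, ‖lam' i - (H : ℝ)⁻¹ • ∑ j, lam' j‖ ^ 2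
        ≤ (1 / (1 - u)) * ∑ i, ‖lam i - (H : ℝ)⁻¹ • ∑ j, lam j‖ ^ 2
          + 4 * (H : ℝ) ^ 3 * β ^ 2 * ψ ^ 2 / (u * (M : ℝ) ^ 2) := by
  intro u hu
  obtain ⟨hu0, hu1⟩ := hu
  have hH0 : (0 : ℝ) < H := by exact_mod_cast hH
  have hM0 : (0 : ℝ) < M := by exact_mod_cast hM
  set c : ℝ := β * ((H : ℝ) / M) with hc
  have hc0 : 0 ≤ c := by positivity
  set lb : EuclideanSpace ℝ (Fin d) := (H : ℝ)⁻¹ • ∑ j, lam j with hlb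
  set gb : EuclideanSpace ℝ (Fin d) := (H : ℝ)⁻¹ • ∑ j, g j with hgb
  -- rewrite lam' deviation
  have hsum' : ∑ j, lam' j = (1 - β * θ) • ∑ j, lam j + c • ∑ j, g j := by
    simp only [hlam', Finset.sum_add_distrib, Finset.smul_sum]
  have hdev : ∀ i, lam' i - (H : ℝ)⁻¹ • ∑ j, lam' j
      = (1 - β * θ) • (lam i - lb) + c • (g i - gb) := by
    intro i
    rw [hlam' i, hsum', hlb, hgb]
    simp only [smul_add, smul_sub, smul_smul]
    rw [mul_comm ((H:ℝ)⁻¹) (1 - β * θ), mul_comm ((H:ℝ)⁻¹) c]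
    abel
  -- bound on ‖g i - gb‖
  have hgbnorm : ‖gb‖ ≤ ψ := by
    rw [hgb, norm_smul]
    have : ‖∑ j, g j‖ ≤ (H : ℝ) * ψ := by
      calc ‖∑ j, g j‖ ≤ ∑ j, ‖g j‖ := norm_sum_le _ _
        _ ≤ ∑ _j : Fin H, ψ := Finset.sum_le_sum fun j _ => hg j
        _ = (H : ℝ) * ψ := by simp [mul_comm]
    calc ‖(H:ℝ)⁻¹‖ * ‖∑ j, g j‖ = (H:ℝ)⁻¹ * ‖∑ j, g j‖ := by
          rw [Real.norm_eq_abs, abs_of_pos (by positivity)]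
      _ ≤ (H:ℝ)⁻¹ * ((H:ℝ) * ψ) := by
          apply mul_le_mul_of_nonneg_left this (by positivity)
      _ = ψ := by field_simp
  have hgdev : ∀ i, ‖g i - gb‖ ≤ 2 * ψ := fun i => by
    calc ‖g i - gb‖ ≤ ‖g i‖ + ‖gb‖ := norm_sub_le _ _
      _ ≤ ψ + ψ := add_le_add (hg i) hgbnorm
      _ = 2 * ψ := by ring
  -- pointwise bound
  have key : ∀ i, ‖lam' i - (H : ℝ)⁻¹ • ∑ j, lam' j‖ ^ 2
      ≤ (1 / (1 - u)) * ‖lam i - lb‖ ^ 2 + (1 / u) * (c ^ 2 * (2 * ψ) ^ 2) := by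
    intro i
    rw [hdev i]
    have h1 := young_norm_sq ((1 - β * θ) • (lam i - lb)) (c • (g i - gb)) hu0 hu1
    have h2 : ‖(1 - β * θ) • (lam i - lb)‖ ^ 2 ≤ ‖lam i - lb‖ ^ 2 := by
      rw [norm_smul, mul_pow, Real.norm_eq_abs, sq_abs]
      have hb : (1 - β * θ) ^ 2 ≤ 1 := by nlinarith [mul_nonneg hβ hθ]
      nlinarith [sq_nonneg ‖lam i - lb‖]
    have h3 : ‖c • (g i - gb)‖ ^ 2 ≤ c ^ 2 * (2 * ψ) ^ 2 := by
      rw [norm_smul, mul_pow, Real.norm_eq_abs, sq_abs]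
      apply mul_le_mul_of_nonneg_left _ (sq_nonneg c)
      apply pow_le_pow_left₀ (norm_nonneg _) (hgdev i)
    have hinv1 : (0:ℝ) ≤ 1 / (1 - u) := by apply div_nonneg <;> linarith
    have hinv2 : (0:ℝ) ≤ 1 / u := by positivity
    nlinarith [mul_le_mul_of_nonneg_left h2 hinv1, mul_le_mul_of_nonneg_left h3 hinv2]
  calc ∑ i, ‖lam' i - (H : ℝ)⁻¹ • ∑ j, lam' j‖ ^ 2
      ≤ ∑ i, ((1 / (1 - u)) * ‖lam i - lb‖ ^ 2 + (1 / u) * (c ^ 2 * (2 * ψ) ^ 2)) :=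
        Finset.sum_le_sum fun i _ => key i
    _ = (1 / (1 - u)) * ∑ i, ‖lam i - lb‖ ^ 2
          + (H : ℝ) * ((1 / u) * (c ^ 2 * (2 * ψ) ^ 2)) := by
        rw [Finset.sum_add_distrib, ← Finset.mul_sum, Finset.sum_const, Finset.card_univ,
          Fintype.card_fin, nsmul_eq_mul]
    _ = (1 / (1 - u)) * ∑ i, ‖lam i - lb‖ ^ 2
          + 4 * (H : ℝ) ^ 3 * β ^ 2 * ψ ^ 2 / (u * (M : ℝ) ^ 2) := by
        have hMne : (M:ℝ) ≠ 0 := ne_of_gt hM0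
        have hune : u ≠ 0 := ne_of_gt hu0
        rw [hc]
        field_simp
        ring
end

section
/- In the above setup, for every t ∈ ℕ the aggregated dual iterates satisfy the uniform disagreement bound Σ_{i=1}^H ‖λ_i^{t+1} − (1/H)Σ_{j=1}^H λ_j^{t+1}‖² ≤ 4H³β²ψ²/(ε³·M²), where ε := 1 − κ − 8√(ρH) > 0. -/
/-!
Let `D(x)` be the ℓ²-norm of the deviations `xᵢ - x̄` of a family from its mean. The half step
is a contraction of the deviations plus a perturbation of size at most `c = β (H/M) √H ψ`, so
`D(λ^{t+1/2}) ≤ D(λ^t) + c`. For the aggregation step write `λ^{t+1} = E λ^{t+1/2} + r`. The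
deviations of `E y` are `(E - 𝟙𝟙ᵀE/H)` applied to the deviations of `y`, hence of size at most
`√κ D(y)`; Property 1, together with the fact that a weighted mean minimises the weighted
spread, gives `‖r‖ ≤ √(ρH) D(λ^{t+1/2})`. Since `√κ + √(ρH) ≤ 1 - ε/2`, the recursion
`D(λ^{t+1}) ≤ (1 - ε/2)(D(λ^t) + c)` keeps `D(λ^t) ≤ 2c/ε`, and `ε ≤ 1` turns `4c²/ε²` into the
stated bound.
-/

open Finset

section Centering

variable {ι E : Type*} [Fintype ι] [NormedAddCommGroup E]

theorem norm_toLp_le_of_forall_norm_le {ψ : ℝ} (hψ : 0 ≤ ψ) {g : ι → E} (hg : ∀ i, ‖g i‖ ≤ ψ) :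
    ‖WithLp.toLp 2 g‖ ≤ √(Fintype.card ι) * ψ := by
  rw [PiLp.norm_eq_of_L2, ← Real.sqrt_sq hψ, ← Real.sqrt_mul (Nat.cast_nonneg _)]
  refine Real.sqrt_le_sqrt ?_
  calc ∑ i, ‖g i‖ ^ 2 ≤ ∑ _i : ι, ψ ^ 2 :=
        sum_le_sum fun i _ => pow_le_pow_left₀ (norm_nonneg _) (hg i) 2
    _ = _ := by simp

variable [InnerProductSpace ℝ E]

noncomputable def centering : (ι → E) →ₗ[ℝ] ι → E where
  toFun x i := x i - (Fintype.card ι : ℝ)⁻¹ • ∑ j, x j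
  map_add' x y := by
    ext i
    simp only [Pi.add_apply, sum_add_distrib, smul_add]
    abel
  map_smul' a x := by
    ext i
    simp only [Pi.smul_apply, RingHom.id_apply, ← smul_sum, smul_sub, smul_comm a]

theorem centering_apply (x : ι → E) (i : ι) :
    centering x i = x i - (Fintype.card ι : ℝ)⁻¹ • ∑ j, x j :=
  rfl

theorem sum_mul_norm_sub_sq_eq (w : ι → ℝ) (hw : ∑ j, w j = 1) (y : ι → E) (m : E) :
    ∑ j, w j * ‖y j - m‖ ^ 2 =
      ∑ j, w j * ‖y j - ∑ k, w k • y k‖ ^ 2 + ‖∑ k, w k • y k - m‖ ^ 2 := by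
  set ybar := ∑ k, w k • y k
  have hdev : ∑ j, w j • (y j - ybar) = 0 := by
    simp only [smul_sub, sum_sub_distrib, ← sum_smul, hw, one_smul, ybar, sub_self]
  calc ∑ j, w j * ‖y j - m‖ ^ 2
      = ∑ j, (w j * ‖y j - ybar‖ ^ 2 + 2 * inner ℝ (w j • (y j - ybar)) (ybar - m)
          + w j * ‖ybar - m‖ ^ 2) := by
        refine sum_congr rfl fun j _ => ?_
        rw [← sub_add_sub_cancel (y j) ybar m, norm_add_sq_real, real_inner_smul_left]
        ring
    _ = _ := by
        rw [sum_add_distrib, sum_add_distrib, ← mul_sum, ← sum_inner, hdev, ← sum_mul, hw]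
        simp

theorem norm_toLp_centering_le (x : ι → E) :
    ‖WithLp.toLp 2 (centering x)‖ ≤ ‖WithLp.toLp 2 x‖ := by
  rcases isEmpty_or_nonempty ι with hι | hι
  · simp [PiLp.norm_eq_of_L2]
  have hn : (0 : ℝ) < (Fintype.card ι : ℝ)⁻¹ := by positivity
  have hw : ∑ _j : ι, (Fintype.card ι : ℝ)⁻¹ = 1 := by simp
  have hvar := sum_mul_norm_sub_sq_eq _ hw x 0
  simp only [sub_zero, ← smul_sum, ← mul_sum] at hvar
  rw [PiLp.norm_eq_of_L2, PiLp.norm_eq_of_L2]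
  refine Real.sqrt_le_sqrt (le_of_mul_le_mul_left ?_ hn)
  simp only [centering_apply]
  linarith [sq_nonneg ‖(Fintype.card ι : ℝ)⁻¹ • ∑ j, x j‖]

theorem norm_toLp_centering_smul_add_smul_le {a b ψ : ℝ} (ha : |a| ≤ 1) (hb : 0 ≤ b)
    (hψ : 0 ≤ ψ) (x g : ι → E) (hg : ∀ i, ‖g i‖ ≤ ψ) :
    ‖WithLp.toLp 2 (centering (a • x + b • g))‖ ≤
      ‖WithLp.toLp 2 (centering x)‖ + b * (√(Fintype.card ι) * ψ) := by
  rw [map_add, map_smul, map_smul, WithLp.toLp_add, WithLp.toLp_smul, WithLp.toLp_smul]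
  refine (norm_add_le _ _).trans (add_le_add ?_ ?_)
  · rw [norm_smul, Real.norm_eq_abs]
    exact mul_le_of_le_one_left (norm_nonneg _) ha
  · rw [norm_smul, Real.norm_of_nonneg hb]
    exact mul_le_mul_of_nonneg_left
      ((norm_toLp_centering_le g).trans (norm_toLp_le_of_forall_norm_le hψ hg)) hb

theorem centering_sum_smul (e : Matrix ι ι ℝ) (hrow : ∀ i, ∑ j, e i j = 1) (y : ι → E) :
    centering (fun i => ∑ j, e i j • y j) =
      fun i => ∑ j,
        (e - Matrix.of fun _ j => (Fintype.card ι : ℝ)⁻¹ * ∑ k, e k j : Matrix ι ι ℝ) i j •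
          centering y j := by
  ext i
  have : Nonempty ι := ⟨i⟩
  set A : Matrix ι ι ℝ := e - Matrix.of fun _ j => (Fintype.card ι : ℝ)⁻¹ * ∑ k, e k j
  have hA : ∑ j, A i j = 0 := by
    simp only [A, Matrix.sub_apply, Matrix.of_apply, sum_sub_distrib, ← mul_sum, hrow i]
    rw [sum_comm]
    simp [hrow]
  calc centering (fun i => ∑ j, e i j • y j) i
      = ∑ j, e i j • y j - ∑ j, ((Fintype.card ι : ℝ)⁻¹ * ∑ k, e k j) • y j := by
        simp only [centering_apply, smul_sum, sum_smul, mul_smul]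
        rw [sum_comm]
    _ = ∑ j, A i j • y j := by
        simp only [A, Matrix.sub_apply, Matrix.of_apply, sub_smul, sum_sub_distrib]
    _ = ∑ j, A i j • centering y j := by
        simp only [centering_apply, smul_sub, sum_sub_distrib, ← sum_smul, hA, zero_smul, sub_zero]

theorem sum_sum_mul_norm_sub_sq_le (e : Matrix ι ι ℝ) (he : ∀ i j, 0 ≤ e i j)
    (hrow : ∀ i, ∑ j, e i j = 1) (y : ι → E) :
    ∑ i, ∑ j, e i j * ‖y j - ∑ k, e i k • y k‖ ^ 2 ≤
      Fintype.card ι * ∑ j, ‖centering y j‖ ^ 2 := by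
  have hlocal : ∀ i, ∑ j, e i j * ‖y j - ∑ k, e i k • y k‖ ^ 2 ≤
      ∑ j, e i j * ‖centering y j‖ ^ 2 := fun i => by
    simp only [centering_apply]
    rw [sum_mul_norm_sub_sq_eq (e i) (hrow i) y ((Fintype.card ι : ℝ)⁻¹ • ∑ j, y j)]
    exact le_add_of_nonneg_right (sq_nonneg _)
  have hcol : ∀ j, ∑ i, e i j ≤ Fintype.card ι := fun j => by
    calc ∑ i, e i j ≤ ∑ _i : ι, (1 : ℝ) := sum_le_sum fun i _ =>
          hrow i ▸ single_le_sum (fun k _ => he i k) (mem_univ j)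
      _ = _ := by simp
  calc _ ≤ ∑ i, ∑ j, e i j * ‖centering y j‖ ^ 2 := sum_le_sum fun i _ => hlocal i
    _ = ∑ j, (∑ i, e i j) * ‖centering y j‖ ^ 2 := by rw [sum_comm]; simp only [sum_mul]
    _ ≤ ∑ j, Fintype.card ι * ‖centering y j‖ ^ 2 :=
        sum_le_sum fun j _ => mul_le_mul_of_nonneg_right (hcol j) (sq_nonneg _)
    _ = _ := (mul_sum ..).symm

end Centering

theorem norm_toLp_sum_smul_le {m n ι : Type*} [Fintype m] [Fintype n] [DecidableEq n] [Fintype ι]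
    (A : Matrix m n ℝ) (v : n → EuclideanSpace ℝ ι) :
    ‖WithLp.toLp 2 (fun i => ∑ j, A i j • v j)‖ ≤
      ‖(Matrix.toEuclideanLin A).toContinuousLinearMap‖ * ‖WithLp.toLp 2 v‖ := by
  set C := ‖(Matrix.toEuclideanLin A).toContinuousLinearMap‖
  have hcoord : ∀ k, ∑ i, (∑ j, A i j * v j k) ^ 2 ≤ C ^ 2 * ∑ j, v j k ^ 2 := fun k => by
    have h := (Matrix.toEuclideanLin A).toContinuousLinearMap.le_opNorm
      (WithLp.toLp 2 fun j => v j k)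
    simpa [mul_pow, EuclideanSpace.norm_sq_eq, Matrix.mulVec, dotProduct] using
      pow_le_pow_left₀ (norm_nonneg _) h 2
  rw [← pow_le_pow_iff_left₀ (norm_nonneg _) (by positivity) two_ne_zero, mul_pow,
    PiLp.norm_sq_eq_of_L2, PiLp.norm_sq_eq_of_L2]
  calc ∑ i, ‖∑ j, A i j • v j‖ ^ 2 = ∑ k, ∑ i, (∑ j, A i j * v j k) ^ 2 := by
        simp only [EuclideanSpace.norm_sq_eq, WithLp.ofLp_sum, WithLp.ofLp_smul, Finset.sum_apply,
          Pi.smul_apply, smul_eq_mul, Real.norm_eq_abs, sq_abs]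
        exact sum_comm
    _ ≤ ∑ k, C ^ 2 * ∑ j, v j k ^ 2 := sum_le_sum fun k _ => hcoord k
    _ = C ^ 2 * ∑ j, ‖v j‖ ^ 2 := by
        rw [← mul_sum, sum_comm]
        simp [EuclideanSpace.norm_sq_eq]

theorem norm_toLp_centering_le_of_contraction {ι ι' : Type*} [Fintype ι] [DecidableEq ι]
    [Fintype ι'] (e : Matrix ι ι ℝ) (he : ∀ i j, 0 ≤ e i j) (hrow : ∀ i, ∑ j, e i j = 1)
    {ρ : ℝ} (hρ : 0 ≤ ρ) (y x : ι → EuclideanSpace ℝ ι')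
    (hx : ∀ i, ‖x i - ∑ j, e i j • y j‖ ^ 2 ≤
      ρ * ∑ j, e i j * ‖y j - ∑ k, e i k • y k‖ ^ 2) :
    ‖WithLp.toLp 2 (centering x)‖ ≤
      (‖(Matrix.toEuclideanLin
          (e - Matrix.of fun _ j => (Fintype.card ι : ℝ)⁻¹ * ∑ k, e k j)).toContinuousLinearMap‖
        + √(ρ * Fintype.card ι)) * ‖WithLp.toLp 2 (centering y)‖ := by
  set r : ι → EuclideanSpace ℝ ι' := fun i => x i - ∑ j, e i j • y j
  have hsplit : x = (fun i => ∑ j, e i j • y j) + r := by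
    ext1 i
    simp [r]
  have hr : ‖WithLp.toLp 2 r‖ ≤ √(ρ * Fintype.card ι) * ‖WithLp.toLp 2 (centering y)‖ := by
    rw [← pow_le_pow_iff_left₀ (norm_nonneg _) (by positivity) two_ne_zero, mul_pow,
      Real.sq_sqrt (by positivity), PiLp.norm_sq_eq_of_L2, PiLp.norm_sq_eq_of_L2, mul_assoc]
    calc ∑ i, ‖r i‖ ^ 2 ≤ ∑ i, ρ * ∑ j, e i j * ‖y j - ∑ k, e i k • y k‖ ^ 2 :=
          sum_le_sum fun i _ => hx i
      _ = ρ * ∑ i, ∑ j, e i j * ‖y j - ∑ k, e i k • y k‖ ^ 2 := (mul_sum ..).symm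
      _ ≤ _ := mul_le_mul_of_nonneg_left (sum_sum_mul_norm_sub_sq_le e he hrow y) hρ
  rw [hsplit, map_add, centering_sum_smul e hrow, WithLp.toLp_add, add_mul]
  exact (norm_add_le _ _).trans
    (add_le_add (norm_toLp_sum_smul_le _ _) ((norm_toLp_centering_le r).trans hr))

theorem le_two_mul_div_of_succ_le {S : ℕ → ℝ} {c ε : ℝ} (hε : 0 < ε) (hε2 : ε ≤ 2)
    (hc : 0 ≤ c) (h0 : S 0 = 0) (hS : ∀ t, S (t + 1) ≤ (1 - ε / 2) * (S t + c)) :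
    ∀ t, S t ≤ 2 * c / ε
  | 0 => h0 ▸ by positivity
  | t + 1 => calc
    S (t + 1) ≤ (1 - ε / 2) * (S t + c) := hS t
    _ ≤ (1 - ε / 2) * (2 * c / ε + c) := by
      gcongr
      · linarith
      · exact le_two_mul_div_of_succ_le hε hε2 hc h0 hS t
    _ = 2 * c / ε - ε * c / 2 := by field_simp; ring
    _ ≤ 2 * c / ε := by linarith [mul_nonneg hε.le hc]

theorem byzantine_dual_disagreement_bound_general
    (d H M : ℕ)
    (β θ : ℝ) (hβ : 0 ≤ β) (hθ : 0 ≤ θ) (hβθ : β * θ ≤ 2)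
    (ψ : ℝ) (hψ : 0 ≤ ψ)
    (Emat : Matrix (Fin H) (Fin H) ℝ)
    (hEnn : ∀ i j, 0 ≤ Emat i j)
    (hErow : ∀ i, ∑ j, Emat i j = 1)
    (κ : ℝ)
    (hκ : κ = ‖LinearMap.toContinuousLinearMap
        (Matrix.toEuclideanLin
          (Emat - Matrix.of fun _ j => (H : ℝ)⁻¹ * ∑ k, Emat k j))‖ ^ 2)
    (ρ : ℝ) (hρ : 0 ≤ ρ) (hρκ : 8 * Real.sqrt (ρ * H) < 1 - κ)
    (ε : ℝ) (hε : ε = 1 - κ - 8 * Real.sqrt (ρ * H))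
    (g : Fin H → ℕ → EuclideanSpace ℝ (Fin d))
    (hg : ∀ i t, ‖g i t‖ ≤ ψ)
    (lam lamhalf : Fin H → ℕ → EuclideanSpace ℝ (Fin d))
    (hlam0 : ∀ i, lam i 0 = 0)
    (hlamhalf : ∀ i t,
      lamhalf i t = (1 - β * θ) • lam i t + (β * ((H : ℝ) / M)) • g i t)
    (hProp1 : ∀ i t,
      ‖lam i (t + 1) - ∑ j, Emat i j • lamhalf j t‖ ^ 2
        ≤ ρ * ∑ j, Emat i j
            * ‖lamhalf j t - ∑ k, Emat i k • lamhalf k t‖ ^ 2) :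
    ∀ t, ∑ i, ‖lam i (t + 1) - (H : ℝ)⁻¹ • ∑ j, lam j (t + 1)‖ ^ 2
      ≤ 4 * (H : ℝ) ^ 3 * β ^ 2 * ψ ^ 2 / (ε ^ 3 * (M : ℝ) ^ 2) := by
  set T := ‖LinearMap.toContinuousLinearMap
    (Matrix.toEuclideanLin (Emat - Matrix.of fun _ j => (H : ℝ)⁻¹ * ∑ k, Emat k j))‖
  have hsqrt : 0 ≤ √(ρ * H) := Real.sqrt_nonneg _
  have hε0 : 0 < ε := by linarith
  have hε1 : ε ≤ 1 := by nlinarith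
  have hcontraction : T + √(ρ * H) ≤ 1 - ε / 2 := by
    rw [hε, hκ]
    -- `T ≤ (1 + T ^ 2) / 2`
    nlinarith [sq_nonneg (1 - T)]
  set c := β * ((H : ℝ) / M) * (√H * ψ)
  have hc : 0 ≤ c := by positivity
  let S : ℕ → ℝ := fun t => ‖WithLp.toLp 2 (centering fun i => lam i t)‖
  have hstep : ∀ t, S (t + 1) ≤ (1 - ε / 2) * (S t + c) := fun t => by
    have hhalf : (fun i => lamhalf i t) =
        (1 - β * θ) • (fun i => lam i t) + (β * ((H : ℝ) / M)) • fun i => g i t :=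
      funext fun i => hlamhalf i t
    have hfull := norm_toLp_centering_le_of_contraction Emat hEnn hErow hρ _
      (fun i => lam i (t + 1)) (fun i => hProp1 i t)
    rw [Fintype.card_fin, hhalf] at hfull
    refine hfull.trans (mul_le_mul hcontraction ?_ (norm_nonneg _) (by linarith))
    simpa using norm_toLp_centering_smul_add_smul_le (abs_le.2 ⟨by nlinarith, by nlinarith⟩)
      (by positivity) hψ _ _ fun i => hg i t
  have h0 : S 0 = 0 := by simp [S, show (fun i => lam i 0) = 0 from funext hlam0]
  have hbound := le_two_mul_div_of_succ_le hε0 (by linarith) hc h0 hstep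
  intro t
  have hc2 : c ^ 2 = (H : ℝ) ^ 3 * β ^ 2 * ψ ^ 2 / (M : ℝ) ^ 2 := by
    simp only [c, mul_pow, div_pow, Real.sq_sqrt (Nat.cast_nonneg H)]
    ring
  calc _ = S (t + 1) ^ 2 := by simp [S, PiLp.norm_sq_eq_of_L2, centering_apply]
    _ ≤ (2 * c / ε) ^ 2 := pow_le_pow_left₀ (norm_nonneg _) (hbound _) 2
    _ = 4 * ((H : ℝ) ^ 3 * β ^ 2 * ψ ^ 2 / (M : ℝ) ^ 2) / ε ^ 2 := by
        rw [div_pow, mul_pow, hc2]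
        ring
    _ ≤ 4 * ((H : ℝ) ^ 3 * β ^ 2 * ψ ^ 2 / (M : ℝ) ^ 2) / ε ^ 3 :=
        div_le_div_of_nonneg_left (by positivity) (by positivity)
          (pow_le_pow_of_le_one hε0.le hε1 (by norm_num))
    _ = _ := by ring

/-- **Uniform disagreement bound for the aggregated dual iterates of the
Byzantine-resilient Algorithm 2 (Lemma 4).** -/
theorem byzantine_dual_disagreement_bound
    (d H M : ℕ) (hH : 1 ≤ H) (hHM : H ≤ M)
    (β θ : ℝ) (hβ : 0 ≤ β) (hθ : 0 ≤ θ) (hβθ : β * θ ≤ 2)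
    (ψ : ℝ) (hψ : 0 ≤ ψ)
    (Emat : Matrix (Fin H) (Fin H) ℝ)
    (hEnn : ∀ i j, 0 ≤ Emat i j)
    (hErow : ∀ i, ∑ j, Emat i j = 1)
    (κ : ℝ)
    (hκ : κ = ‖LinearMap.toContinuousLinearMap
        (Matrix.toEuclideanLin
          (Emat - Matrix.of fun _ j => (H : ℝ)⁻¹ * ∑ k, Emat k j))‖ ^ 2)
    (ρ : ℝ) (hρ : 0 ≤ ρ) (hρκ : 8 * Real.sqrt (ρ * H) < 1 - κ)
    (ε : ℝ) (hε : ε = 1 - κ - 8 * Real.sqrt (ρ * H))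
    (g : Fin H → ℕ → EuclideanSpace ℝ (Fin d))
    (hg : ∀ i t, ‖g i t‖ ≤ ψ)
    (lam lamhalf : Fin H → ℕ → EuclideanSpace ℝ (Fin d))
    (hlam0 : ∀ i, lam i 0 = 0)
    (hlamhalf : ∀ i t,
      lamhalf i t = (1 - β * θ) • lam i t + (β * ((H : ℝ) / M)) • g i t)
    (hProp1 : ∀ i t,
      ‖lam i (t + 1) - ∑ j, Emat i j • lamhalf j t‖ ^ 2
        ≤ ρ * ∑ j, Emat i j
            * ‖lamhalf j t - ∑ k, Emat i k • lamhalf k t‖ ^ 2) :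
    ∀ t, ∑ i, ‖lam i (t + 1) - (H : ℝ)⁻¹ • ∑ j, lam j (t + 1)‖ ^ 2
      ≤ 4 * (H : ℝ) ^ 3 * β ^ 2 * ψ ^ 2 / (ε ^ 3 * (M : ℝ) ^ 2) :=
  byzantine_dual_disagreement_bound_general d H M β θ hβ hθ hβθ ψ hψ Emat hEnn hErow κ hκ ρ hρ hρκ ε
    hε g hg lam lamhalf hlam0 hlamhalf hProp1
end

section
/- In the above setup, for every λ ∈ ℝ^d and every t ∈ ℕ, writing λ̄^t := (1/M)Σ_{i=1}^M λ_i^t and Δ̃^t := M‖λ̄^{t+1} − λ‖² − M‖λ̄^t − λ‖², it holds that Δ̃^t/(2β) ≤ Σ_{i=1}^M ⟨λ̄^t, g̃_i^t⟩ − Σ_{i=1}^M ⟨λ, g̃_i^t⟩ + 2ψ̃²Mβ + (Mθ/2)·‖λ‖². -/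
open scoped RealInnerProductSpace

set_option maxHeartbeats 1000000 in

/-- **Descent-type inequality for the averaged dual iterates of the
attack-free Algorithm 1 (Lemma 9).** -/
theorem attack_free_dual_descent_inequality
    (d M : ℕ) (hM : 1 ≤ M)
    (β θ : ℝ) (hβ : 0 < β) (hθ : 0 < θ) (hβθ : β * θ ≤ 1)
    (ψt : ℝ) (hψt : 0 ≤ ψt)
    (Et : Matrix (Fin M) (Fin M) ℝ)
    (hEnn : ∀ i j, 0 ≤ Et i j)
    (hErow : ∀ i, ∑ j, Et i j = 1)
    (hEcol : ∀ j, ∑ i, Et i j = 1)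
    (g : Fin M → ℕ → EuclideanSpace ℝ (Fin d))
    (hg : ∀ i t, ‖g i t‖ ≤ ψt)
    (lam lamhalf : Fin M → ℕ → EuclideanSpace ℝ (Fin d))
    (hlam0 : ∀ i, lam i 0 = 0)
    (hlamhalf : ∀ i t, lamhalf i t = (1 - β * θ) • lam i t + β • g i t)
    (hlamstep : ∀ i t, lam i (t + 1) = ∑ j, Et i j • lamhalf j t) :
    ∀ (lamv : EuclideanSpace ℝ (Fin d)) (t : ℕ),
      ((M : ℝ) * ‖(M : ℝ)⁻¹ • (∑ i, lam i (t + 1)) - lamv‖ ^ 2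
          - (M : ℝ) * ‖(M : ℝ)⁻¹ • (∑ i, lam i t) - lamv‖ ^ 2) / (2 * β)
        ≤ ∑ i, ⟪(M : ℝ)⁻¹ • ∑ j, lam j t, g i t⟫
          - ∑ i, ⟪lamv, g i t⟫
          + 2 * ψt ^ 2 * (M : ℝ) * β
          + ((M : ℝ) * θ / 2) * ‖lamv‖ ^ 2 := by
  have hM0 : (0:ℝ) < M := by exact_mod_cast hM
  have hβθ' : 0 ≤ 1 - β * θ := by linarith
  -- uniform bound on iterates
  have hbound : ∀ t i, ‖lam i t‖ ≤ ψt / θ := by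
    intro t
    induction t with
    | zero => intro i; rw [hlam0]; simp; positivity
    | succ t ih =>
      have hhalf : ∀ j, ‖lamhalf j t‖ ≤ ψt / θ := by
        intro j
        rw [hlamhalf]
        calc ‖(1 - β*θ) • lam j t + β • g j t‖
            ≤ ‖(1 - β*θ) • lam j t‖ + ‖β • g j t‖ := norm_add_le _ _
          _ ≤ (1 - β*θ) * (ψt/θ) + β * ψt := by
              rw [norm_smul, norm_smul, Real.norm_of_nonneg hβθ', Real.norm_of_nonneg hβ.le]
              have h1 : 0 ≤ ψt / θ := by positivity
              have := ih j
              have := hg j t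
              nlinarith [norm_nonneg (lam j t), norm_nonneg (g j t)]
          _ = ψt/θ := by field_simp; ring
      intro i
      rw [hlamstep]
      calc ‖∑ j, Et i j • lamhalf j t‖ ≤ ∑ j, ‖Et i j • lamhalf j t‖ :=
            norm_sum_le _ _
        _ ≤ ∑ j, Et i j * (ψt/θ) := by
            refine Finset.sum_le_sum fun j _ => ?_
            rw [norm_smul, Real.norm_of_nonneg (hEnn i j)]
            exact mul_le_mul_of_nonneg_left (hhalf j) (hEnn i j)
        _ = ψt/θ := by rw [← Finset.sum_mul, hErow i, one_mul]
  -- sum recursion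
  have hsum : ∀ t, (∑ i, lam i (t+1))
      = (1 - β*θ) • (∑ i, lam i t) + β • (∑ i, g i t) := by
    intro t
    have h1 : ∀ j, ∑ i, Et i j • lamhalf j t = lamhalf j t := by
      intro j; rw [← Finset.sum_smul, hEcol j, one_smul]
    calc (∑ i, lam i (t+1)) = ∑ i, ∑ j, Et i j • lamhalf j t := by
          simp only [hlamstep]
      _ = ∑ j, ∑ i, Et i j • lamhalf j t := by rw [Finset.sum_comm]
      _ = ∑ j, lamhalf j t := by simp only [h1]
      _ = (1 - β*θ) • (∑ i, lam i t) + β • (∑ i, g i t) := by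
          simp only [hlamhalf]
          rw [Finset.sum_add_distrib, Finset.smul_sum, Finset.smul_sum]
  intro lamv t
  set S := ∑ i, lam i t with hS
  set G := ∑ i, g i t with hG
  set a := (M:ℝ)⁻¹ • S with ha
  set v := (M:ℝ)⁻¹ • G - θ • a with hv
  have hMne : (M:ℝ) ≠ 0 := ne_of_gt hM0
  have hstep : (M:ℝ)⁻¹ • (∑ i, lam i (t+1)) = (a - lamv) + lamv + β • v := by
    rw [hsum t, ← hS, ← hG, hv, ha]
    rw [smul_add, smul_smul, smul_smul]
    module
  -- norms
  have hnG : ‖(M:ℝ)⁻¹ • G‖ ≤ ψt := by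
    rw [norm_smul, Real.norm_of_nonneg (by positivity : (0:ℝ) ≤ (M:ℝ)⁻¹)]
    have : ‖G‖ ≤ (M:ℝ) * ψt := by
      calc ‖G‖ ≤ ∑ i, ‖g i t‖ := norm_sum_le _ _
        _ ≤ ∑ _i : Fin M, ψt := Finset.sum_le_sum fun i _ => hg i t
        _ = (M:ℝ) * ψt := by simp [mul_comm]
    calc (M:ℝ)⁻¹ * ‖G‖ ≤ (M:ℝ)⁻¹ * ((M:ℝ) * ψt) := by
          exact mul_le_mul_of_nonneg_left this (by positivity)
      _ = ψt := by field_simp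
  have hna : ‖a‖ ≤ ψt / θ := by
    rw [ha, norm_smul, Real.norm_of_nonneg (by positivity : (0:ℝ) ≤ (M:ℝ)⁻¹)]
    have : ‖S‖ ≤ (M:ℝ) * (ψt/θ) := by
      calc ‖S‖ ≤ ∑ i, ‖lam i t‖ := norm_sum_le _ _
        _ ≤ ∑ _i : Fin M, (ψt/θ) := Finset.sum_le_sum fun i _ => hbound t i
        _ = (M:ℝ) * (ψt/θ) := by simp [mul_comm]
    calc (M:ℝ)⁻¹ * ‖S‖ ≤ (M:ℝ)⁻¹ * ((M:ℝ) * (ψt/θ)) := by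
          exact mul_le_mul_of_nonneg_left this (by positivity)
      _ = ψt/θ := by field_simp
  have hnv : ‖v‖ ≤ 2 * ψt := by
    rw [hv]
    calc ‖(M:ℝ)⁻¹ • G - θ • a‖ ≤ ‖(M:ℝ)⁻¹ • G‖ + ‖θ • a‖ := norm_sub_le _ _
      _ ≤ ψt + θ * (ψt/θ) := by
          rw [norm_smul θ a, Real.norm_of_nonneg hθ.le]
          exact add_le_add hnG (mul_le_mul_of_nonneg_left hna hθ.le)
      _ = 2 * ψt := by field_simp; ring
  -- expand the squared norm
  have hexp : ‖(M:ℝ)⁻¹ • (∑ i, lam i (t+1)) - lamv‖^2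
      = ‖a - lamv‖^2 + 2 * (β * ⟪a - lamv, v⟫) + β^2 * ‖v‖^2 := by
    rw [hstep]
    have : (a - lamv) + lamv + β • v - lamv = (a - lamv) + β • v := by module
    rw [this, norm_add_sq_real, real_inner_smul_right, norm_smul,
      Real.norm_of_nonneg hβ.le, mul_pow]
  have hGinner : ∀ x : EuclideanSpace ℝ (Fin d),
      (M:ℝ) * ⟪x, (M:ℝ)⁻¹ • G⟫ = ∑ i, ⟪x, g i t⟫ := by
    intro x
    rw [real_inner_smul_right, hG, inner_sum]
    field_simp
  have hinner : (M:ℝ) * ⟪a - lamv, v⟫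
      = (∑ i, ⟪a, g i t⟫) - (∑ i, ⟪lamv, g i t⟫)
        + (M:ℝ) * θ * ⟪lamv, a⟫ - (M:ℝ) * θ * ‖a‖^2 := by
    have hdec : ⟪a - lamv, v⟫
        = ⟪a, (M:ℝ)⁻¹ • G⟫ - ⟪lamv, (M:ℝ)⁻¹ • G⟫ - θ * ‖a‖^2 + θ * ⟪lamv, a⟫ := by
      rw [hv]
      simp only [inner_sub_left, inner_sub_right, real_inner_smul_right,
        real_inner_self_eq_norm_sq]
      ring
    have e1 := hGinner a
    have e2 := hGinner lamv
    linear_combination (M:ℝ) * hdec + e1 - e2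
  -- rewrite the LHS
  have key : ((M:ℝ) * ‖(M:ℝ)⁻¹ • (∑ i, lam i (t+1)) - lamv‖^2
      - (M:ℝ) * ‖a - lamv‖^2) / (2*β)
      = (M:ℝ) * ⟪a - lamv, v⟫ + (β/2) * ((M:ℝ) * ‖v‖^2) := by
    rw [hexp]; field_simp; ring
  rw [key, hinner]
  have h1 : ⟪lamv, a⟫ ≤ (‖lamv‖^2 + ‖a‖^2)/2 := by
    nlinarith [real_inner_le_norm lamv a, sq_nonneg (‖lamv‖ - ‖a‖)]
  have h2 : ‖v‖^2 ≤ 4 * ψt^2 := by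
    nlinarith [hnv, norm_nonneg v]
  have h3 : (M:ℝ) * θ * ⟪lamv, a⟫ ≤ (M:ℝ) * θ * ((‖lamv‖^2 + ‖a‖^2)/2) :=
    mul_le_mul_of_nonneg_left h1 (by positivity)
  have h4 : (β/2) * ((M:ℝ) * ‖v‖^2) ≤ (β/2) * ((M:ℝ) * (4 * ψt^2)) := by
    have : (M:ℝ) * ‖v‖^2 ≤ (M:ℝ) * (4 * ψt^2) :=
      mul_le_mul_of_nonneg_left h2 hM0.le
    exact mul_le_mul_of_nonneg_left this (by positivity)
  have h5 : 0 ≤ (M:ℝ) * θ * ‖a‖^2 := by positivity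
  nlinarith [h3, h4, h5]
end

section
/- Let ρ̃ ≥ 0 and suppose c := Σ_{j∈S^c} e_j < 1. If z ∈ E is any vector satisfying ‖z − ȳ‖² ≤ ρ̃·Σ_{j∈S} e_j ‖y_j − ȳ‖², then ‖z − λ̄‖² ≤ (ρ̃ + c/(1−c))·Σ_{j∈S} e_j ‖λ_j − λ̄‖². -/
/-- The clipping operator `clip_C(v) = min(1, C/‖v‖)·v` (with `clip_C(0) = 0`,
since in Lean `C/0 = 0`). -/
noncomputable def clip {E : Type*} [NormedAddCommGroup E] [InnerProductSpace ℝ E]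
    (C : ℝ) (v : E) : E := min 1 (C / ‖v‖) • v

/-!
For `C ≥ 0`, `clip C` is the metric projection onto the closed ball of radius `C`. Since the
clipped mean `ȳ` lies in that ball, the projection inequality summed over `S` gives
`Var(y) + D ≤ Var(λ) + ‖λ̄ - ȳ‖²`, where `D = Σ e_j ‖λ_j - y_j‖²` is the clipping loss; and
since only indices of `S^c` are moved, Jensen's inequality gives `‖λ̄ - ȳ‖² ≤ c D`. Together,
`‖λ̄ - ȳ‖² ≤ c/(1-c) · (Var(λ) - Var(y))`, and Cauchy–Schwarz in the form
`(a + b)² ≤ (p + q)(A + B)` for `a² ≤ pA`, `b² ≤ qB` combines this with the hypothesis on `z`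
through the triangle inequality `‖z - λ̄‖ ≤ ‖z - ȳ‖ + ‖λ̄ - ȳ‖`.
-/

open scoped RealInnerProductSpace

lemma add_sq_le_add_mul_add {a b p q A B : ℝ} (hp : 0 ≤ p) (hq : 0 ≤ q) (hA : 0 ≤ A)
    (hB : 0 ≤ B) (h₁ : a ^ 2 ≤ p * A) (h₂ : b ^ 2 ≤ q * B) :
    (a + b) ^ 2 ≤ (p + q) * (A + B) := by
  have hsq : (2 * a * b) ^ 2 ≤ (p * B + q * A) ^ 2 := by
    nlinarith [sq_nonneg (p * B - q * A), mul_le_mul h₁ h₂ (sq_nonneg b) (mul_nonneg hp hA)]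
  have hcross : 2 * a * b ≤ p * B + q * A := le_of_sq_le_sq hsq (by positivity)
  nlinarith

section Clip

variable {E : Type*} [NormedAddCommGroup E] [InnerProductSpace ℝ E]

lemma clip_of_norm_le {C : ℝ} {v : E} (h : ‖v‖ ≤ C) : clip C v = v := by
  rcases eq_or_ne v 0 with rfl | hv
  · simp [clip]
  · rw [clip, min_eq_left ((one_le_div (norm_pos_iff.2 hv)).2 h), one_smul]

lemma clip_of_lt_norm {C : ℝ} {v : E} (h : C < ‖v‖) : clip C v = (C / ‖v‖) • v := by
  rw [clip, min_eq_right (div_le_one_of_le₀ h.le (norm_nonneg v))]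

lemma norm_clip_le {C : ℝ} (hC : 0 ≤ C) (v : E) : ‖clip C v‖ ≤ C := by
  rcases le_or_gt ‖v‖ C with h | h
  · rwa [clip_of_norm_le h]
  · rw [clip_of_lt_norm h, norm_smul, Real.norm_of_nonneg (by positivity),
      div_mul_cancel₀ _ (hC.trans_lt h).ne']

lemma inner_sub_clip_clip_sub_nonneg {C : ℝ} (v : E) {w : E} (hw : ‖w‖ ≤ C) :
    0 ≤ ⟪v - clip C v, clip C v - w⟫ := by
  rcases le_or_gt ‖v‖ C with h | h
  · simp [clip_of_norm_le h]
  have hv : 0 < ‖v‖ := (norm_nonneg w).trans_lt (hw.trans_lt h)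
  have hsub : v - (C / ‖v‖) • v = (1 - C / ‖v‖) • v := by rw [sub_smul, one_smul]
  have hself : C / ‖v‖ * ‖v‖ ^ 2 = C * ‖v‖ := by field_simp
  rw [clip_of_lt_norm h, hsub, real_inner_smul_left, inner_sub_right, real_inner_smul_right,
    real_inner_self_eq_norm_sq, hself]
  refine mul_nonneg (sub_nonneg.2 (div_le_one_of_le₀ h.le hv.le)) ?_
  nlinarith [real_inner_le_norm v w, mul_le_mul_of_nonneg_left hw hv.le]

lemma norm_clip_sub_sq_add_norm_sub_clip_sq_le {C : ℝ} (v : E) {w : E} (hw : ‖w‖ ≤ C) :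
    ‖clip C v - w‖ ^ 2 + ‖v - clip C v‖ ^ 2 ≤ ‖v - w‖ ^ 2 := by
  rw [← sub_add_sub_cancel v (clip C v) w, norm_add_sq_real]
  nlinarith [inner_sub_clip_clip_sub_nonneg v hw]

end Clip

section WeightedMean

variable {E : Type*} [NormedAddCommGroup E] [InnerProductSpace ℝ E] {ι : Type*} {s : Finset ι}
  {e : ι → ℝ}

lemma sum_mul_norm_sub_sq_eq_add (hsum : ∑ j ∈ s, e j = 1) (x : ι → E) (w : E) :
    ∑ j ∈ s, e j * ‖x j - w‖ ^ 2
      = ∑ j ∈ s, e j * ‖x j - ∑ k ∈ s, e k • x k‖ ^ 2 + ‖∑ k ∈ s, e k • x k - w‖ ^ 2 := by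
  set μ := ∑ k ∈ s, e k • x k
  have hcentered : ∑ j ∈ s, e j • (x j - μ) = 0 := by
    simp only [smul_sub, Finset.sum_sub_distrib, ← Finset.sum_smul, hsum, one_smul, sub_self, μ]
  have hcross : ∑ j ∈ s, e j * ⟪x j - μ, μ - w⟫ = 0 := by
    simp_rw [← real_inner_smul_left, ← sum_inner, hcentered, inner_zero_left]
  calc ∑ j ∈ s, e j * ‖x j - w‖ ^ 2
      = ∑ j ∈ s, (e j * ‖x j - μ‖ ^ 2 + 2 * (e j * ⟪x j - μ, μ - w⟫) + e j * ‖μ - w‖ ^ 2) := by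
        refine Finset.sum_congr rfl fun j _ => ?_
        rw [← sub_add_sub_cancel (x j) μ w, norm_add_sq_real]
        ring
    _ = _ := by
        rw [Finset.sum_add_distrib, Finset.sum_add_distrib, ← Finset.mul_sum, ← Finset.sum_mul,
          hcross, hsum]
        ring

lemma norm_sum_smul_sq_le (he : ∀ j ∈ s, 0 ≤ e j) (x : ι → E) :
    ‖∑ j ∈ s, e j • x j‖ ^ 2 ≤ (∑ j ∈ s, e j) * ∑ j ∈ s, e j * ‖x j‖ ^ 2 := by
  calc ‖∑ j ∈ s, e j • x j‖ ^ 2 ≤ (∑ j ∈ s, e j * ‖x j‖) ^ 2 := by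
        gcongr
        refine (norm_sum_le _ _).trans_eq (Finset.sum_congr rfl fun j hj => ?_)
        rw [norm_smul, Real.norm_of_nonneg (he j hj)]
    _ ≤ _ := Finset.sum_sq_le_sum_mul_sum_of_sq_le_mul s he
        (fun j hj => mul_nonneg (he j hj) (sq_nonneg _)) fun j _ => le_of_eq (by ring)

lemma sum_mul_norm_clip_sub_sq_add_le {C : ℝ} (hC : 0 ≤ C) (he : ∀ j ∈ s, 0 ≤ e j)
    (hsum : ∑ j ∈ s, e j = 1) (x : ι → E) :
    ∑ j ∈ s, e j * ‖clip C (x j) - ∑ k ∈ s, e k • clip C (x k)‖ ^ 2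
        + ∑ j ∈ s, e j * ‖x j - clip C (x j)‖ ^ 2
      ≤ ∑ j ∈ s, e j * ‖x j - ∑ k ∈ s, e k • x k‖ ^ 2
        + ‖∑ k ∈ s, e k • x k - ∑ k ∈ s, e k • clip C (x k)‖ ^ 2 := by
  have hmean : ‖∑ k ∈ s, e k • clip C (x k)‖ ≤ C := by
    simpa using (convex_closedBall (0 : E) C).sum_mem he hsum
      fun j _ => mem_closedBall_zero_iff.2 (norm_clip_le hC (x j))
  rw [← sum_mul_norm_sub_sq_eq_add hsum, ← Finset.sum_add_distrib]
  refine Finset.sum_le_sum fun j hj => ?_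
  rw [← mul_add]
  exact mul_le_mul_of_nonneg_left (norm_clip_sub_sq_add_norm_sub_clip_sq_le _ hmean) (he j hj)

lemma norm_sum_smul_sub_sum_smul_clip_sq_le (he : ∀ j ∈ s, 0 ≤ e j) (C : ℝ) (x : ι → E) :
    ‖∑ k ∈ s, e k • x k - ∑ k ∈ s, e k • clip C (x k)‖ ^ 2
      ≤ (∑ j ∈ s.filter (fun j => C < ‖x j‖), e j)
        * ∑ j ∈ s, e j * ‖x j - clip C (x j)‖ ^ 2 := by
  have hmoved (j : ι) (hj : x j - clip C (x j) ≠ 0) : C < ‖x j‖ := by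
    by_contra! h
    exact hj (by rw [clip_of_norm_le h, sub_self])
  have he' : ∀ j ∈ s.filter (fun j => C < ‖x j‖), 0 ≤ e j :=
    fun j hj => he j (Finset.mem_filter.1 hj).1
  rw [← Finset.sum_sub_distrib]
  simp_rw [← smul_sub]
  rw [← Finset.sum_filter_of_ne fun j _ h => hmoved j (right_ne_zero_of_smul h)]
  refine (norm_sum_smul_sq_le he' _).trans (mul_le_mul_of_nonneg_left ?_ (Finset.sum_nonneg he'))
  exact Finset.sum_le_sum_of_subset_of_nonneg (Finset.filter_subset _ _)
    fun j hj _ => mul_nonneg (he j hj) (sq_nonneg _)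

end WeightedMean

theorem agg_arc_contraction_general
    {E : Type*} [NormedAddCommGroup E] [InnerProductSpace ℝ E]
    {ι : Type*} (S : Finset ι)
    (e : ι → ℝ) (he : ∀ j ∈ S, 0 ≤ e j) (hsum : ∑ j ∈ S, e j = 1)
    (lam : ι → E) (C : ℝ) (hC : 0 ≤ C)
    (ρt : ℝ) (hρt : 0 ≤ ρt)
    (hc : ∑ j ∈ S.filter (fun j => C < ‖lam j‖), e j < 1)
    (z : E)
    (hz : ‖z - ∑ j ∈ S, e j • clip C (lam j)‖ ^ 2
        ≤ ρt * ∑ j ∈ S, e j * ‖clip C (lam j) - ∑ k ∈ S, e k • clip C (lam k)‖ ^ 2) :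
    ‖z - ∑ j ∈ S, e j • lam j‖ ^ 2
      ≤ (ρt + (∑ j ∈ S.filter (fun j => C < ‖lam j‖), e j)
            / (1 - ∑ j ∈ S.filter (fun j => C < ‖lam j‖), e j))
        * ∑ j ∈ S, e j * ‖lam j - ∑ k ∈ S, e k • lam k‖ ^ 2 := by
  set c := ∑ j ∈ S.filter (fun j => C < ‖lam j‖), e j
  set lb := ∑ k ∈ S, e k • lam k
  set yb := ∑ k ∈ S, e k • clip C (lam k)
  set V := ∑ j ∈ S, e j * ‖lam j - lb‖ ^ 2
  set Vy := ∑ j ∈ S, e j * ‖clip C (lam j) - yb‖ ^ 2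
  set D := ∑ j ∈ S, e j * ‖lam j - clip C (lam j)‖ ^ 2
  have hc0 : 0 ≤ c := Finset.sum_nonneg fun j hj => he j (Finset.mem_filter.1 hj).1
  have h1c : 0 < 1 - c := sub_pos.2 hc
  have hD0 : 0 ≤ D := Finset.sum_nonneg fun j hj => mul_nonneg (he j hj) (sq_nonneg _)
  have hVy0 : 0 ≤ Vy := Finset.sum_nonneg fun j hj => mul_nonneg (he j hj) (sq_nonneg _)
  have hbias : ‖lb - yb‖ ^ 2 ≤ c * D := norm_sum_smul_sub_sum_smul_clip_sq_le he C lam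
  have hvar : Vy + D ≤ V + ‖lb - yb‖ ^ 2 := sum_mul_norm_clip_sub_sq_add_le hC he hsum lam
  have hgap : ‖lb - yb‖ ^ 2 ≤ c / (1 - c) * (V - Vy) := by
    rw [div_mul_eq_mul_div, le_div_iff₀ h1c]
    nlinarith
  calc ‖z - lb‖ ^ 2 ≤ (‖z - yb‖ + ‖lb - yb‖) ^ 2 := by
        gcongr
        exact (norm_sub_le_norm_sub_add_norm_sub z yb lb).trans_eq (by rw [norm_sub_rev yb])
    _ ≤ (ρt + c / (1 - c)) * (Vy + (V - Vy)) :=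
        add_sq_le_add_mul_add hρt (div_nonneg hc0 h1c.le) hVy0 (by nlinarith) hz hgap
    _ = _ := by rw [add_sub_cancel]

/-- **Composing a robust aggregation rule satisfying Property 1 (contraction
constant ρ̃) with adaptive robust clipping yields Property 1 with contraction
constant ρ̃ + c/(1−c) (Lemma on AGG∘ARC).** -/
theorem agg_arc_contraction
    {E : Type*} [NormedAddCommGroup E] [InnerProductSpace ℝ E]
    {ι : Type*} [DecidableEq ι] (S : Finset ι) (hS : S.Nonempty)
    (e : ι → ℝ) (he : ∀ j ∈ S, 0 ≤ e j) (hsum : ∑ j ∈ S, e j = 1)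
    (lam : ι → E) (C : ℝ) (hC : 0 ≤ C)
    (ρt : ℝ) (hρt : 0 ≤ ρt)
    (hc : ∑ j ∈ S.filter (fun j => C < ‖lam j‖), e j < 1)
    (z : E)
    (hz : ‖z - ∑ j ∈ S, e j • clip C (lam j)‖ ^ 2
        ≤ ρt * ∑ j ∈ S, e j * ‖clip C (lam j) - ∑ k ∈ S, e k • clip C (lam k)‖ ^ 2) :
    ‖z - ∑ j ∈ S, e j • lam j‖ ^ 2
      ≤ (ρt + (∑ j ∈ S.filter (fun j => C < ‖lam j‖), e j)
            / (1 - ∑ j ∈ S.filter (fun j => C < ‖lam j‖), e j))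
        * ∑ j ∈ S, e j * ‖lam j - ∑ k ∈ S, e k • lam k‖ ^ 2 :=
  agg_arc_contraction_general S e he hsum lam C hC ρt hρt hc z hz
end

section
/- Let N be a finite index set, b ∈ ℕ with |N| ≥ b + 1, and (λ̌_j)_{j∈N} a family of vectors in a real inner product space. Let B ⊆ N with |B| ≤ b (the Byzantine senders). Let C be the (b+1)-th largest element of the multiset of norms {‖λ̌_j‖ : j ∈ N} (i.e., the (b+1)-th entry of these norms sorted in nonincreasing order, counted with multiplicity). Then for every j ∈ N: ‖clip_C(λ̌_j)‖ ≤ max_{j' ∈ N∖B} ‖λ̌_{j'}‖. -/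
theorem List.length_sub_le_countP_getElem_le {α : Type*} [LinearOrder α] {l : List α}
    (hl : l.SortedLE) {k : ℕ} (hk : k < l.length) :
    l.length - k ≤ l.countP (l[k] ≤ ·) := by
  have hdrop : (l.drop k).countP (l[k] ≤ ·) = (l.drop k).length :=
    List.countP_eq_length.mpr fun x hx => by
      obtain ⟨i, hi, rfl⟩ := List.mem_iff_getElem.mp hx
      simpa using hl.getElem_le_getElem_of_le (Nat.le_add_right k i)
  rw [← List.length_drop, ← hdrop]
  exact (List.drop_sublist k l).countP_le

theorem Multiset.card_sub_le_countP_sort_getElem_le {α : Type*} [LinearOrder α]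
    (s : Multiset α) {k : ℕ} (hk : k < (s.sort (· ≤ ·)).length) :
    s.card - k ≤ s.countP ((s.sort (· ≤ ·))[k] ≤ ·) := by
  have := List.length_sub_le_countP_getElem_le (Multiset.pairwise_sort s (· ≤ ·)).sortedLE hk
  rwa [Multiset.length_sort, ← Multiset.coe_countP, Multiset.sort_eq] at this

theorem Finset.card_sub_le_card_filter_sort_getElem_le {ι α : Type*} [LinearOrder α]
    (N : Finset ι) (f : ι → α) {k : ℕ} (hk : k < ((N.val.map f).sort (· ≤ ·)).length) :
    N.card - k ≤ (N.filter fun j => ((N.val.map f).sort (· ≤ ·))[k] ≤ f j).card := by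
  have := (N.val.map f).card_sub_le_countP_sort_getElem_le hk
  rwa [Multiset.countP_map, Multiset.card_map, ← Finset.card_def] at this

theorem norm_clip {E : Type*} [NormedAddCommGroup E] [InnerProductSpace ℝ E]
    {C : ℝ} (hC : 0 ≤ C) (v : E) : ‖clip C v‖ = min ‖v‖ C := by
  rcases eq_or_ne v 0 with rfl | hv
  · simp [clip, hC]
  have hv_pos : 0 < ‖v‖ := norm_pos_iff.mpr hv
  rw [clip, norm_smul, Real.norm_of_nonneg (le_min zero_le_one (by positivity)),
    min_mul_of_nonneg _ _ hv_pos.le, one_mul, div_mul_cancel₀ _ hv_pos.ne']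

theorem arc_clip_norm_le_max_benign_general
    {E : Type*} [NormedAddCommGroup E] [InnerProductSpace ℝ E]
    {ι : Type*} [DecidableEq ι]
    (N : Finset ι) (b : ℕ) (hNb : b + 1 ≤ N.card)
    (lamc : ι → E)
    (B : Finset ι) (hB : B.card ≤ b)
    (C : ℝ)
    (hC : C = ((N.val.map fun j => ‖lamc j‖).sort (· ≤ ·)).getD
        (N.card - 1 - b) 0) :
    ∀ j ∈ N, ‖clip C (lamc j)‖
      ≤ sSup ((fun j' => ‖lamc j'‖) '' ((N \ B : Finset ι) : Set ι)) := by
  intro j _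
  have hk : N.card - 1 - b < ((N.val.map fun j => ‖lamc j‖).sort (· ≤ ·)).length := by
    rw [Multiset.length_sort, Multiset.card_map, ← Finset.card_def]
    omega
  rw [List.getD_eq_getElem _ _ hk] at hC
  have hC_nonneg : 0 ≤ C := by
    obtain ⟨_, _, hC_eq⟩ :=
      Multiset.mem_map.mp ((Multiset.mem_sort _).mp (hC ▸ List.getElem_mem hk))
    exact hC_eq ▸ norm_nonneg _
  have hlarge : B.card < (N.filter fun j => C ≤ ‖lamc j‖).card := by
    have := N.card_sub_le_card_filter_sort_getElem_le (fun j => ‖lamc j‖) hk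
    rw [← hC] at this
    omega
  obtain ⟨j₀, hj₀, hj₀B⟩ := Finset.exists_mem_notMem_of_card_lt_card hlarge
  rw [Finset.mem_filter] at hj₀
  calc ‖clip C (lamc j)‖ = min ‖lamc j‖ C := norm_clip hC_nonneg _
    _ ≤ C := min_le_right _ _
    _ ≤ ‖lamc j₀‖ := hj₀.2
    _ ≤ _ := le_csSup ((Set.toFinite _).image _).bddAbove ⟨j₀, by simp [hj₀.1, hj₀B], rfl⟩

/-- **Adaptive robust clipping (ARC) guarantee:** with the clipping threshold
chosen as the (b+1)-th largest received norm (the entry at position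
`N.card - 1 - b` of the norms sorted in nondecreasing order, counted with
multiplicity), and at most `b` Byzantine senders, every clipped vector has
norm at most the maximal norm of the benign received vectors. -/
theorem arc_clip_norm_le_max_benign
    {E : Type*} [NormedAddCommGroup E] [InnerProductSpace ℝ E]
    {ι : Type*} [DecidableEq ι]
    (N : Finset ι) (b : ℕ) (hNb : b + 1 ≤ N.card)
    (lamc : ι → E)
    (B : Finset ι) (hBN : B ⊆ N) (hB : B.card ≤ b)
    (C : ℝ)
    (hC : C = ((N.val.map fun j => ‖lamc j‖).sort (· ≤ ·)).getD
        (N.card - 1 - b) 0) :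
    ∀ j ∈ N, ‖clip C (lamc j)‖
      ≤ sSup ((fun j' => ‖lamc j'‖) '' ((N \ B : Finset ι) : Set ι)) :=
  arc_clip_norm_le_max_benign_general N b hNb lamc B hB C hC
end
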